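/- arXiv:1105.0793 — 5 statements merged into one kernel-verified Lean document; each statement's English description precedes it below -/
import Mathlib

section
/- For all subsets I, G ⊆ S and all x, y ∈ X, the marginal of the recombination jump vector satisfies π_I.v_{G,x,y} = v^{(I)}_{G∩I, π_I(x), π_I(y)} in ℤ^{X_I}, where v^{(I)}_{H,u,w} := δ_{p̂_H(u,w)} + δ_{p̂_{I∖H}(u,w)} − δ_u − δ_w is the jump vector of a recombination event on the site set I (p̂ being the recombination map on X_I). In particular, a recombination jump of the full population configuration induces a recombination jump of every marginal configuration. -/
open scoped Classical

noncomputable section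

namespace MoranRecomb

variable {n : ℕ} {Xa : Fin n → Type*}

/-- The recombination map `p_G`: alleles at sites in `G` from `x`, elsewhere from `y`. -/
def recMap (G : Finset (Fin n)) (x y : ∀ i, Xa i) : ∀ i, Xa i :=
  fun i => if i ∈ G then x i else y i

/-- The delta (point) counting measure. -/
def delta {α : Type*} (x : α) : α → ℤ := fun w => if w = x then 1 else 0

/-- The jump vector `v_{G,x,y} = δ_{p_G(x,y)} + δ_{p_Ḡ(x,y)} - δ_x - δ_y` of a
recombination event (with `Ḡ = S ∖ G`). -/
def jump (G : Finset (Fin n)) (x y : ∀ i, Xa i) : (∀ i, Xa i) → ℤ :=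
  fun w => delta (recMap G x y) w + delta (recMap Gᶜ x y) w - delta x w - delta y w

/-- The canonical projection `π_I` onto the marginal type space `X_I`. -/
def projI (I : Finset (Fin n)) (x : ∀ i, Xa i) : ∀ i : {j // j ∈ I}, Xa i.val :=
  fun i => x i.val

/-- The marginal `π_I.w ∈ ℤ^{X_I}` of `w ∈ ℤ^X`. -/
def margI [∀ i, Fintype (Xa i)] (I : Finset (Fin n)) (w : (∀ i, Xa i) → ℤ) :
    (∀ i : {j // j ∈ I}, Xa i.val) → ℤ :=
  fun u => ∑ y : ∀ i, Xa i, if projI I y = u then w y else 0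

/-- The recombination map `p̂_H` on the marginal type space `X_I`. -/
def recMapI (I : Finset (Fin n)) (H : Finset (Fin n))
    (u w : ∀ i : {j // j ∈ I}, Xa i.val) : ∀ i : {j // j ∈ I}, Xa i.val :=
  fun i => if i.val ∈ H then u i else w i

/-- The jump vector `v^{(I)}_{H,u,w} = δ_{p̂_H(u,w)} + δ_{p̂_{I∖H}(u,w)} − δ_u − δ_w` of a
recombination event on the site set `I`. -/
def jumpI (I : Finset (Fin n)) (H : Finset (Fin n))
    (u w : ∀ i : {j // j ∈ I}, Xa i.val) : (∀ i : {j // j ∈ I}, Xa i.val) → ℤ :=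
  fun v => delta (recMapI I H u w) v + delta (recMapI I (I \ H) u w) v
    - delta u v - delta w v

/-- The marginal of the recombination jump vector:
`π_I.v_{G,x,y} = v^{(I)}_{G∩I, π_I(x), π_I(y)}`, so a recombination jump of the full
population configuration induces a recombination jump of every marginal configuration. -/
theorem marg_jump (hn : 1 ≤ n)
    [∀ i, Fintype (Xa i)] [∀ i, Nonempty (Xa i)]
    (I G : Finset (Fin n)) (x y : ∀ i, Xa i) :
    margI I (jump G x y) = jumpI I (G ∩ I) (projI I x) (projI I y) := by
  have hdelta : ∀ (z : ∀ i, Xa i) (u : ∀ i : {j // j ∈ I}, Xa i.val),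
      margI I (delta z) u = delta (projI I z) u := by
    intro z u
    unfold margI delta
    rw [Finset.sum_eq_single z (fun b _ hb => by simp [hb])
      (fun h => absurd (Finset.mem_univ z) h)]
    simp [eq_comm]
  have h1 : projI I (recMap G x y) = recMapI I (G ∩ I) (projI I x) (projI I y) := by
    funext i
    simp [projI, recMap, recMapI, Finset.mem_inter, i.prop]
  have h2 : projI I (recMap Gᶜ x y)
      = recMapI I (I \ (G ∩ I)) (projI I x) (projI I y) := by
    funext i
    simp [projI, recMap, recMapI, Finset.mem_sdiff, Finset.mem_inter,
      Finset.mem_compl, i.prop]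
  funext u
  have hsplit : margI I (jump G x y) u
      = margI I (delta (recMap G x y)) u + margI I (delta (recMap Gᶜ x y)) u
        - margI I (delta x) u - margI I (delta y) u := by
    unfold margI jump
    rw [← Finset.sum_add_distrib, ← Finset.sum_sub_distrib, ← Finset.sum_sub_distrib]
    apply Finset.sum_congr rfl
    intro z _
    by_cases h : projI I z = u <;> simp [h]
  rw [hsplit, hdelta, hdelta, hdelta, hdelta, h1, h2]
  rfl

end MoranRecomb
end
end

section
/- Fix a reference type x° ∈ X and a subset G ⊆ S. For every z : X → ℝ, ∑_{(u,w) ∈ X × X, v_{G,u,w}(x°) = 1} z(u) z(w) = 2 · ([G]_z − z(x°)) · ([Ḡ]_z − z(x°)). Consequently, in the Moran model with recombination, the total rate of the transition z(x°) → z(x°) + 1 equals ∑_{G⊆S} (ρ_G/(2N)) ([G]_z − z(x°)) ([Ḡ]_z − z(x°)). -/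
open scoped Classical

noncomputable section

namespace MoranRecomb

variable {n : ℕ} {Xa : Fin n → Type*}

/-- `[A]_z = (π_A.z)(π_A(x°))`: the `A`-marginal of `z` evaluated at the reference type. -/
def margR [∀ i, Fintype (Xa i)] (A : Finset (Fin n)) (z : (∀ i, Xa i) → ℝ)
    (u : ∀ i, Xa i) : ℝ :=
  ∑ y : ∀ i, Xa i, if ∀ i ∈ A, y i = u i then z y else 0

lemma recMap_eq_iff (G : Finset (Fin n)) (u w x0 : ∀ i, Xa i) :
    recMap G u w = x0 ↔ (∀ i ∈ G, u i = x0 i) ∧ (∀ i ∈ Gᶜ, w i = x0 i) := by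
  constructor
  · intro h
    refine ⟨fun i hi => ?_, fun i hi => ?_⟩
    · have := congrFun h i; simpa [recMap, hi] using this
    · have := congrFun h i
      rw [Finset.mem_compl] at hi
      simpa [recMap, hi] using this
  · rintro ⟨h1, h2⟩
    funext i
    by_cases hi : i ∈ G
    · simpa [recMap, hi] using h1 i hi
    · simpa [recMap, hi] using h2 i (Finset.mem_compl.2 hi)

lemma eq_of_both (G : Finset (Fin n)) (u x0 : ∀ i, Xa i)
    (h1 : ∀ i ∈ G, u i = x0 i) (h2 : ∀ i ∈ Gᶜ, u i = x0 i) : u = x0 := by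
  funext i
  by_cases hi : i ∈ G
  · exact h1 i hi
  · exact h2 i (Finset.mem_compl.2 hi)

lemma ite_tauto (A1 A2 B1 B2 : Prop)
    [Decidable (A1 ∧ B2)] [Decidable (A2 ∧ B1)] [Decidable (A1 ∧ A2)] [Decidable (B1 ∧ B2)] :
    ((((if A1 ∧ B2 then (1 : ℤ) else 0) + (if A2 ∧ B1 then (1 : ℤ) else 0))
        - (if A1 ∧ A2 then (1 : ℤ) else 0)) - (if B1 ∧ B2 then (1 : ℤ) else 0)) = 1 ↔
      (((A1 ∧ ¬(A1 ∧ A2)) ∧ (B2 ∧ ¬(B1 ∧ B2))) ∨ ((A2 ∧ ¬(A1 ∧ A2)) ∧ (B1 ∧ ¬(B1 ∧ B2)))) := by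
  by_cases h1 : A1 <;> by_cases h2 : A2 <;> by_cases h3 : B1 <;> by_cases h4 : B2 <;>
    simp [h1, h2, h3, h4]

lemma jump_eq_one_iff (G : Finset (Fin n)) (u w x0 : ∀ i, Xa i) :
    jump G u w x0 = 1 ↔
      ((((∀ i ∈ G, u i = x0 i) ∧ u ≠ x0) ∧ ((∀ i ∈ Gᶜ, w i = x0 i) ∧ w ≠ x0)) ∨
       (((∀ i ∈ Gᶜ, u i = x0 i) ∧ u ≠ x0) ∧ ((∀ i ∈ G, w i = x0 i) ∧ w ≠ x0))) := by
  have key : jump G u w x0 =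
      (if x0 = recMap G u w then (1 : ℤ) else 0) +
      (if x0 = recMap Gᶜ u w then (1 : ℤ) else 0) -
      (if x0 = u then (1 : ℤ) else 0) - (if x0 = w then (1 : ℤ) else 0) := by
    unfold jump delta; congr
  have e1 : (x0 = recMap G u w) ↔ (∀ i ∈ G, u i = x0 i) ∧ (∀ i ∈ Gᶜ, w i = x0 i) := by
    rw [eq_comm, recMap_eq_iff]
  have e2 : (x0 = recMap Gᶜ u w) ↔ (∀ i ∈ Gᶜ, u i = x0 i) ∧ (∀ i ∈ G, w i = x0 i) := by
    rw [eq_comm, recMap_eq_iff, compl_compl]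
  have hu : (u = x0) ↔ (∀ i ∈ G, u i = x0 i) ∧ (∀ i ∉ G, u i = x0 i) :=
    ⟨fun e => by subst e; exact ⟨fun i _ => rfl, fun i _ => rfl⟩,
     fun h => eq_of_both G u x0 h.1 (fun i hi => h.2 i (Finset.mem_compl.1 hi))⟩
  have hw : (w = x0) ↔ (∀ i ∈ G, w i = x0 i) ∧ (∀ i ∉ G, w i = x0 i) :=
    ⟨fun e => by subst e; exact ⟨fun i _ => rfl, fun i _ => rfl⟩,
     fun h => eq_of_both G w x0 h.1 (fun i hi => h.2 i (Finset.mem_compl.1 hi))⟩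
  have e3 : (x0 = u) ↔ (∀ i ∈ G, u i = x0 i) ∧ (∀ i ∉ G, u i = x0 i) := by
    rw [eq_comm]; exact hu
  have e4 : (x0 = w) ↔ (∀ i ∈ G, w i = x0 i) ∧ (∀ i ∉ G, w i = x0 i) := by
    rw [eq_comm]; exact hw
  rw [key]
  simp only [e1, e2, e3, e4, ne_eq, hu, hw]
  simp only [Finset.mem_compl]
  exact ite_tauto (∀ i ∈ G, u i = x0 i) (∀ i ∉ G, u i = x0 i)
    (∀ i ∈ G, w i = x0 i) (∀ i ∉ G, w i = x0 i)

lemma margR_sub (A : Finset (Fin n)) [∀ i, Fintype (Xa i)]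
    (z : (∀ i, Xa i) → ℝ) (x0 : ∀ i, Xa i) :
    margR A z x0 - z x0
      = ∑ u : ∀ i, Xa i, (if (∀ i ∈ A, u i = x0 i) ∧ u ≠ x0 then z u else 0) := by
  have h : margR A z x0
      = (∑ u : ∀ i, Xa i, (if (∀ i ∈ A, u i = x0 i) ∧ u ≠ x0 then z u else 0)) + z x0 := by
    rw [margR]
    have hz : z x0 = ∑ u : ∀ i, Xa i, (if u = x0 then z u else 0) := by
      rw [Finset.sum_ite_eq' Finset.univ x0 z]
      simp
    rw [hz, ← Finset.sum_add_distrib]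
    apply Finset.sum_congr rfl
    intro u _
    by_cases hu : u = x0
    · subst hu; simp
    · by_cases hA : ∀ i ∈ A, u i = x0 i <;> simp [hu, hA]
  rw [h]; ring

lemma key_sum (G : Finset (Fin n)) [∀ i, Fintype (Xa i)]
    (z : (∀ i, Xa i) → ℝ) (x0 : ∀ i, Xa i) :
    ∑ u : ∀ i, Xa i, ∑ w : ∀ i, Xa i,
        (if jump G u w x0 = 1 then z u * z w else 0)
      = 2 * (margR G z x0 - z x0) * (margR Gᶜ z x0 - z x0) := by
  have split : ∀ u w : ∀ i, Xa i,
      (if jump G u w x0 = 1 then z u * z w else 0)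
        = (if ((∀ i ∈ G, u i = x0 i) ∧ u ≠ x0) ∧ ((∀ i ∈ Gᶜ, w i = x0 i) ∧ w ≠ x0)
            then z u * z w else 0)
          + (if ((∀ i ∈ Gᶜ, u i = x0 i) ∧ u ≠ x0) ∧ ((∀ i ∈ G, w i = x0 i) ∧ w ≠ x0)
            then z u * z w else 0) := by
    intro u w
    by_cases hA : ((∀ i ∈ G, u i = x0 i) ∧ u ≠ x0) ∧ ((∀ i ∈ Gᶜ, w i = x0 i) ∧ w ≠ x0) <;>
      by_cases hB : ((∀ i ∈ Gᶜ, u i = x0 i) ∧ u ≠ x0) ∧ ((∀ i ∈ G, w i = x0 i) ∧ w ≠ x0)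
    · exact absurd (eq_of_both G u x0 hA.1.1 hB.1.1) hA.1.2
    · have h : jump G u w x0 = 1 := (jump_eq_one_iff G u w x0).2 (Or.inl hA)
      rw [if_pos h, if_pos hA, if_neg hB, add_zero]
    · have h : jump G u w x0 = 1 := (jump_eq_one_iff G u w x0).2 (Or.inr hB)
      rw [if_pos h, if_neg hA, if_pos hB, zero_add]
    · have h : ¬ jump G u w x0 = 1 := fun hh => by
        rcases (jump_eq_one_iff G u w x0).1 hh with c | c
        exacts [hA c, hB c]
      rw [if_neg h, if_neg hA, if_neg hB, add_zero]
  calc ∑ u : ∀ i, Xa i, ∑ w : ∀ i, Xa i, (if jump G u w x0 = 1 then z u * z w else 0)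
      = (∑ u : ∀ i, Xa i, ∑ w : ∀ i, Xa i,
          (if ((∀ i ∈ G, u i = x0 i) ∧ u ≠ x0) ∧ ((∀ i ∈ Gᶜ, w i = x0 i) ∧ w ≠ x0)
            then z u * z w else 0))
        + (∑ u : ∀ i, Xa i, ∑ w : ∀ i, Xa i,
          (if ((∀ i ∈ Gᶜ, u i = x0 i) ∧ u ≠ x0) ∧ ((∀ i ∈ G, w i = x0 i) ∧ w ≠ x0)
            then z u * z w else 0)) := by
        rw [← Finset.sum_add_distrib]
        apply Finset.sum_congr rfl
        intro u _
        rw [← Finset.sum_add_distrib]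
        exact Finset.sum_congr rfl fun w _ => split u w
    _ = 2 * (margR G z x0 - z x0) * (margR Gᶜ z x0 - z x0) := by
        have f1 : (∑ u : ∀ i, Xa i, ∑ w : ∀ i, Xa i,
            (if ((∀ i ∈ G, u i = x0 i) ∧ u ≠ x0) ∧ ((∀ i ∈ Gᶜ, w i = x0 i) ∧ w ≠ x0)
              then z u * z w else 0))
            = (∑ u : ∀ i, Xa i, (if (∀ i ∈ G, u i = x0 i) ∧ u ≠ x0 then z u else 0))
              * (∑ w : ∀ i, Xa i, (if (∀ i ∈ Gᶜ, w i = x0 i) ∧ w ≠ x0 then z w else 0)) := by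
          rw [Finset.sum_mul_sum]
          refine Finset.sum_congr rfl fun u _ => Finset.sum_congr rfl fun w _ => ?_
          by_cases hP : (∀ i ∈ G, u i = x0 i) ∧ u ≠ x0 <;>
            by_cases hQ : (∀ i ∈ Gᶜ, w i = x0 i) ∧ w ≠ x0
          · rw [if_pos ⟨hP, hQ⟩, if_pos hP, if_pos hQ]
          · rw [if_neg (fun h => hQ h.2), if_neg hQ, mul_zero]
          · rw [if_neg (fun h => hP h.1), if_neg hP, zero_mul]
          · rw [if_neg (fun h => hP h.1), if_neg hP, zero_mul]
        have f2 : (∑ u : ∀ i, Xa i, ∑ w : ∀ i, Xa i,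
            (if ((∀ i ∈ Gᶜ, u i = x0 i) ∧ u ≠ x0) ∧ ((∀ i ∈ G, w i = x0 i) ∧ w ≠ x0)
              then z u * z w else 0))
            = (∑ u : ∀ i, Xa i, (if (∀ i ∈ Gᶜ, u i = x0 i) ∧ u ≠ x0 then z u else 0))
              * (∑ w : ∀ i, Xa i, (if (∀ i ∈ G, w i = x0 i) ∧ w ≠ x0 then z w else 0)) := by
          rw [Finset.sum_mul_sum]
          refine Finset.sum_congr rfl fun u _ => Finset.sum_congr rfl fun w _ => ?_
          by_cases hP : (∀ i ∈ Gᶜ, u i = x0 i) ∧ u ≠ x0 <;>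
            by_cases hQ : (∀ i ∈ G, w i = x0 i) ∧ w ≠ x0
          · rw [if_pos ⟨hP, hQ⟩, if_pos hP, if_pos hQ]
          · rw [if_neg (fun h => hQ h.2), if_neg hQ, mul_zero]
          · rw [if_neg (fun h => hP h.1), if_neg hP, zero_mul]
          · rw [if_neg (fun h => hP h.1), if_neg hP, zero_mul]
        rw [f1, f2, margR_sub G z x0, margR_sub Gᶜ z x0]
        ring

/-- For a fixed reference type `x°` and `G ⊆ S`:
`∑_{(u,w) : v_{G,u,w}(x°) = 1} z(u) z(w) = 2 ([G]_z − z(x°)) ([Ḡ]_z − z(x°))`;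
consequently the total rate of the transition `z(x°) → z(x°) + 1` in the Moran model with
recombination is `∑_G (ρ_G/(2N)) ([G]_z − z(x°)) ([Ḡ]_z − z(x°))`. -/
theorem gain_rate (hn : 1 ≤ n)
    [∀ i, Fintype (Xa i)] [∀ i, Nonempty (Xa i)]
    (x0 : ∀ i, Xa i) (z : (∀ i, Xa i) → ℝ)
    (ρ : Finset (Fin n) → ℝ) (hρ0 : ∀ G, 0 ≤ ρ G) (hρc : ∀ G, ρ G = ρ Gᶜ)
    (hρe : ρ ∅ = 0) (hρu : ρ Finset.univ = 0) (N : ℝ) (hN : 0 < N) :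
    (∀ G : Finset (Fin n),
      ∑ u : ∀ i, Xa i, ∑ w : ∀ i, Xa i,
          (if jump G u w x0 = 1 then z u * z w else 0)
        = 2 * (margR G z x0 - z x0) * (margR Gᶜ z x0 - z x0)) ∧
    ∑ G : Finset (Fin n), ∑ u : ∀ i, Xa i, ∑ w : ∀ i, Xa i,
        (if jump G u w x0 = 1 then ρ G / (4 * N) * z u * z w else 0)
      = ∑ G : Finset (Fin n),
          ρ G / (2 * N) * (margR G z x0 - z x0) * (margR Gᶜ z x0 - z x0) := by
  refine ⟨fun G => key_sum G z x0, ?_⟩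
  apply Finset.sum_congr rfl
  intro G _
  have h : ∑ u : ∀ i, Xa i, ∑ w : ∀ i, Xa i,
      (if jump G u w x0 = 1 then ρ G / (4 * N) * z u * z w else 0)
    = ρ G / (4 * N) * ∑ u : ∀ i, Xa i, ∑ w : ∀ i, Xa i,
        (if jump G u w x0 = 1 then z u * z w else 0) := by
    rw [Finset.mul_sum]
    apply Finset.sum_congr rfl
    intro u _
    rw [Finset.mul_sum]
    apply Finset.sum_congr rfl
    intro w _
    by_cases hc : jump G u w x0 = 1 <;> simp [hc, mul_assoc]
  rw [h, key_sum G z x0]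
  have hN' : N ≠ 0 := ne_of_gt hN
  field_simp
  ring

end MoranRecomb
end
end

section
/- Fix a reference type x° ∈ X and a subset G ⊆ S. For every z : X → ℝ, ∑_{(u,w) ∈ X × X, v_{G,u,w}(x°) = −1} z(u) z(w) = 2 · z(x°) · ([∅]_z − [G]_z − [Ḡ]_z + z(x°)), where [∅]_z = ∑_{y∈X} z(y). Consequently, in the Moran model with recombination on a population of size N (so [∅]_z = N), the total rate of the transition z(x°) → z(x°) − 1 equals ∑_{G⊆S} (ρ_G/(2N)) z(x°) (N − [G]_z − [Ḡ]_z + z(x°)). -/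
open scoped Classical

noncomputable section

namespace MoranRecomb

variable {n : ℕ} {Xa : Fin n → Type*}

lemma eq_x0_iff (G : Finset (Fin n)) (u x0 : ∀ i, Xa i) :
    u = x0 ↔ (∀ i ∈ G, u i = x0 i) ∧ (∀ i ∈ Gᶜ, u i = x0 i) := by
  constructor
  · rintro rfl; exact ⟨fun _ _ => rfl, fun _ _ => rfl⟩
  · rintro ⟨h1, h2⟩
    funext i
    by_cases hi : i ∈ G
    · exact h1 i hi
    · exact h2 i (Finset.mem_compl.2 hi)

lemma jump_eq_neg_one_iff (G : Finset (Fin n)) (u w x0 : ∀ i, Xa i) :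
    jump G u w x0 = -1 ↔
      (u = x0 ∧ ¬(∀ i ∈ G, w i = x0 i) ∧ ¬(∀ i ∈ Gᶜ, w i = x0 i)) ∨
      (w = x0 ∧ ¬(∀ i ∈ G, u i = x0 i) ∧ ¬(∀ i ∈ Gᶜ, u i = x0 i)) := by
  have h1 : (x0 = recMap G u w) ↔ (∀ i ∈ G, u i = x0 i) ∧ (∀ i ∈ Gᶜ, w i = x0 i) := by
    rw [eq_comm, recMap_eq_iff]
  have h2 : (x0 = recMap Gᶜ u w) ↔ (∀ i ∈ Gᶜ, u i = x0 i) ∧ (∀ i ∈ G, w i = x0 i) := by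
    rw [eq_comm, recMap_eq_iff, compl_compl]
  have h3 : (x0 = u) ↔ (∀ i ∈ G, u i = x0 i) ∧ (∀ i ∈ Gᶜ, u i = x0 i) := by
    rw [eq_comm, eq_x0_iff]
  have h4 : (x0 = w) ↔ (∀ i ∈ G, w i = x0 i) ∧ (∀ i ∈ Gᶜ, w i = x0 i) := by
    rw [eq_comm, eq_x0_iff]
  have h3' : (u = x0) ↔ (∀ i ∈ G, u i = x0 i) ∧ (∀ i ∈ Gᶜ, u i = x0 i) := eq_x0_iff G u x0
  have h4' : (w = x0) ↔ (∀ i ∈ G, w i = x0 i) ∧ (∀ i ∈ Gᶜ, w i = x0 i) := eq_x0_iff G w x0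
  have key : ∀ (a b c d : Prop) (_ : Decidable (a ∧ d)) (_ : Decidable (b ∧ c))
      (_ : Decidable (a ∧ b)) (_ : Decidable (c ∧ d)),
      ((if a ∧ d then (1 : ℤ) else 0) + (if b ∧ c then 1 else 0)
          - (if a ∧ b then 1 else 0) - (if c ∧ d then 1 else 0) = -1
        ↔ ((a ∧ b) ∧ ¬c ∧ ¬d) ∨ ((c ∧ d) ∧ ¬a ∧ ¬b)) := by
    intro a b c d _ _ _ _
    by_cases ha : a <;> by_cases hb : b <;> by_cases hc : c <;> by_cases hd : d <;>
      simp [ha, hb, hc, hd]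
  simp only [jump, delta, h1, h2, h3, h4, h3', h4']
  exact key _ _ _ _ _ _ _ _

/-- For a fixed reference type `x°` and `G ⊆ S`:
`∑_{(u,w) : v_{G,u,w}(x°) = −1} z(u) z(w) = 2 z(x°) ([∅]_z − [G]_z − [Ḡ]_z + z(x°))`;
consequently, on a population of size `N` (so `[∅]_z = N`), the total rate of the
transition `z(x°) → z(x°) − 1` in the Moran model with recombination is
`∑_G (ρ_G/(2N)) z(x°) (N − [G]_z − [Ḡ]_z + z(x°))`. -/
theorem loss_rate (hn : 1 ≤ n)
    [∀ i, Fintype (Xa i)] [∀ i, Nonempty (Xa i)]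
    (x0 : ∀ i, Xa i) (z : (∀ i, Xa i) → ℝ)
    (ρ : Finset (Fin n) → ℝ) (hρ0 : ∀ G, 0 ≤ ρ G) (hρc : ∀ G, ρ G = ρ Gᶜ)
    (hρe : ρ ∅ = 0) (hρu : ρ Finset.univ = 0)
    (N : ℝ) (hN : 0 < N) (hzN : ∑ y : ∀ i, Xa i, z y = N) :
    (∀ G : Finset (Fin n),
      ∑ u : ∀ i, Xa i, ∑ w : ∀ i, Xa i,
          (if jump G u w x0 = -1 then z u * z w else 0)
        = 2 * z x0 * (margR ∅ z x0 - margR G z x0 - margR Gᶜ z x0 + z x0)) ∧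
    ∑ G : Finset (Fin n), ∑ u : ∀ i, Xa i, ∑ w : ∀ i, Xa i,
        (if jump G u w x0 = -1 then ρ G / (4 * N) * z u * z w else 0)
      = ∑ G : Finset (Fin n),
          ρ G / (2 * N) * z x0 * (N - margR G z x0 - margR Gᶜ z x0 + z x0) := by
  have hE : margR (∅ : Finset (Fin n)) z x0 = N := by
    rw [← hzN, margR]
    exact Finset.sum_congr rfl fun y _ =>
      if_pos (fun i hi => absurd hi (Finset.notMem_empty i))
  have key : ∀ G : Finset (Fin n),
      ∑ u : ∀ i, Xa i, ∑ w : ∀ i, Xa i,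
          (if jump G u w x0 = -1 then z u * z w else 0)
        = 2 * z x0 * (margR ∅ z x0 - margR G z x0 - margR Gᶜ z x0 + z x0) := by
    intro G
    have hQsum : (∑ w : ∀ i, Xa i,
        if ¬(∀ i ∈ G, w i = x0 i) ∧ ¬(∀ i ∈ Gᶜ, w i = x0 i) then z w else 0)
        = margR ∅ z x0 - margR G z x0 - margR Gᶜ z x0 + z x0 := by
      have hpt : ∀ w : ∀ i, Xa i,
          (if ¬(∀ i ∈ G, w i = x0 i) ∧ ¬(∀ i ∈ Gᶜ, w i = x0 i) then z w else 0)
          = z w - (if ∀ i ∈ G, w i = x0 i then z w else 0)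
              - (if ∀ i ∈ Gᶜ, w i = x0 i then z w else 0)
              + (if (∀ i ∈ G, w i = x0 i) ∧ (∀ i ∈ Gᶜ, w i = x0 i) then z w else 0) := by
        intro w
        by_cases hA : ∀ i ∈ G, w i = x0 i <;> by_cases hB : ∀ i ∈ Gᶜ, w i = x0 i
        · rw [if_neg (fun hc => hc.1 hA), if_pos hA, if_pos hB, if_pos ⟨hA, hB⟩]; ring
        · rw [if_neg (fun hc => hc.1 hA), if_pos hA, if_neg hB,
            if_neg (fun hc => hB hc.2)]; ring
        · rw [if_neg (fun hc => hc.2 hB), if_neg hA, if_pos hB,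
            if_neg (fun hc => hA hc.1)]; ring
        · rw [if_pos ⟨hA, hB⟩, if_neg hA, if_neg hB, if_neg (fun hc => hA hc.1)]; ring
      rw [Finset.sum_congr rfl fun w _ => hpt w]
      rw [Finset.sum_add_distrib, Finset.sum_sub_distrib, Finset.sum_sub_distrib]
      have hAB : (∑ w : ∀ i, Xa i,
          if (∀ i ∈ G, w i = x0 i) ∧ (∀ i ∈ Gᶜ, w i = x0 i) then z w else 0) = z x0 := by
        have : ∀ w : ∀ i, Xa i,
            (if (∀ i ∈ G, w i = x0 i) ∧ (∀ i ∈ Gᶜ, w i = x0 i) then z w else 0)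
            = if w = x0 then z w else 0 := by
          intro w
          by_cases h : w = x0
          · rw [if_pos ((eq_x0_iff G w x0).1 h), if_pos h]
          · rw [if_neg (fun hc => h ((eq_x0_iff G w x0).2 hc)), if_neg h]
        rw [Finset.sum_congr rfl fun w _ => this w]
        simp
      rw [hAB]
      have hMe : margR (∅ : Finset (Fin n)) z x0 = ∑ y : ∀ i, Xa i, z y := by
        rw [margR]
        exact Finset.sum_congr rfl fun y _ =>
          if_pos (fun i hi => absurd hi (Finset.notMem_empty i))
      rw [hMe]
      simp only [margR]
    have hsplit : ∀ u w : ∀ i, Xa i,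
        (if jump G u w x0 = -1 then z u * z w else 0)
        = (if u = x0 ∧ ¬(∀ i ∈ G, w i = x0 i) ∧ ¬(∀ i ∈ Gᶜ, w i = x0 i)
            then z u * z w else 0)
          + (if w = x0 ∧ ¬(∀ i ∈ G, u i = x0 i) ∧ ¬(∀ i ∈ Gᶜ, u i = x0 i)
            then z u * z w else 0) := by
      intro u w
      simp only [jump_eq_neg_one_iff]
      by_cases h1 : u = x0 ∧ ¬(∀ i ∈ G, w i = x0 i) ∧ ¬(∀ i ∈ Gᶜ, w i = x0 i) <;>
        by_cases h2 : w = x0 ∧ ¬(∀ i ∈ G, u i = x0 i) ∧ ¬(∀ i ∈ Gᶜ, u i = x0 i)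
      · exfalso
        exact h1.2.1 (h2.1 ▸ fun i _ => rfl)
      · rw [if_pos (Or.inl h1), if_pos h1, if_neg h2, add_zero]
      · rw [if_pos (Or.inr h2), if_neg h1, if_pos h2, zero_add]
      · rw [if_neg (fun hc => hc.elim h1 h2), if_neg h1, if_neg h2, add_zero]
    rw [Finset.sum_congr rfl fun u _ => Finset.sum_congr rfl fun w _ => hsplit u w]
    simp only [Finset.sum_add_distrib]
    have hfirst : (∑ u : ∀ i, Xa i, ∑ w : ∀ i, Xa i,
        if u = x0 ∧ ¬(∀ i ∈ G, w i = x0 i) ∧ ¬(∀ i ∈ Gᶜ, w i = x0 i)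
          then z u * z w else 0)
        = z x0 * (margR ∅ z x0 - margR G z x0 - margR Gᶜ z x0 + z x0) := by
      have : ∀ u : ∀ i, Xa i, (∑ w : ∀ i, Xa i,
          if u = x0 ∧ ¬(∀ i ∈ G, w i = x0 i) ∧ ¬(∀ i ∈ Gᶜ, w i = x0 i)
            then z u * z w else 0)
          = if u = x0 then z x0 * (∑ w : ∀ i, Xa i,
              if ¬(∀ i ∈ G, w i = x0 i) ∧ ¬(∀ i ∈ Gᶜ, w i = x0 i) then z w else 0)
            else 0 := by
        intro u
        by_cases hu : u = x0
        · rw [if_pos hu, Finset.mul_sum]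
          refine Finset.sum_congr rfl fun w _ => ?_
          by_cases hw : (¬∀ i ∈ G, w i = x0 i) ∧ ¬∀ i ∈ Gᶜ, w i = x0 i
          · rw [if_pos ⟨hu, hw⟩, if_pos hw, hu]
          · rw [if_neg (fun hc => hw hc.2), if_neg hw, mul_zero]
        · rw [if_neg hu]
          refine Finset.sum_eq_zero fun w _ => ?_
          rw [if_neg (fun hc => hu hc.1)]
      rw [Finset.sum_congr rfl fun u _ => this u, Finset.sum_ite_eq' Finset.univ x0,
        if_pos (Finset.mem_univ x0), hQsum]
    have hsecond : (∑ u : ∀ i, Xa i, ∑ w : ∀ i, Xa i,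
        if w = x0 ∧ ¬(∀ i ∈ G, u i = x0 i) ∧ ¬(∀ i ∈ Gᶜ, u i = x0 i)
          then z u * z w else 0)
        = z x0 * (margR ∅ z x0 - margR G z x0 - margR Gᶜ z x0 + z x0) := by
      have : ∀ u : ∀ i, Xa i, (∑ w : ∀ i, Xa i,
          if w = x0 ∧ ¬(∀ i ∈ G, u i = x0 i) ∧ ¬(∀ i ∈ Gᶜ, u i = x0 i)
            then z u * z w else 0)
          = if ¬(∀ i ∈ G, u i = x0 i) ∧ ¬(∀ i ∈ Gᶜ, u i = x0 i)
              then z u * z x0 else 0 := by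
        intro u
        by_cases hu : ¬(∀ i ∈ G, u i = x0 i) ∧ ¬(∀ i ∈ Gᶜ, u i = x0 i)
        · rw [if_pos hu]
          have h2 : ∀ w : ∀ i, Xa i,
              (if w = x0 ∧ ¬(∀ i ∈ G, u i = x0 i) ∧ ¬(∀ i ∈ Gᶜ, u i = x0 i)
                then z u * z w else 0)
              = if w = x0 then z u * z w else 0 := by
            intro w
            by_cases hw : w = x0
            · rw [if_pos ⟨hw, hu⟩, if_pos hw]
            · rw [if_neg (fun hc => hw hc.1), if_neg hw]
          rw [Finset.sum_congr rfl fun w _ => h2 w, Finset.sum_ite_eq' Finset.univ x0,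
            if_pos (Finset.mem_univ x0)]
        · rw [if_neg hu]
          refine Finset.sum_eq_zero fun w _ => ?_
          rw [if_neg (fun hc => hu hc.2)]
      rw [Finset.sum_congr rfl fun u _ => this u]
      have : ∀ u : ∀ i, Xa i,
          (if ¬(∀ i ∈ G, u i = x0 i) ∧ ¬(∀ i ∈ Gᶜ, u i = x0 i)
            then z u * z x0 else 0)
          = (if ¬(∀ i ∈ G, u i = x0 i) ∧ ¬(∀ i ∈ Gᶜ, u i = x0 i)
            then z u else 0) * z x0 := by
        intro u; split <;> simp
      rw [Finset.sum_congr rfl fun u _ => this u, ← Finset.sum_mul, hQsum]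
      ring
    rw [hfirst, hsecond]
    ring
  refine ⟨key, ?_⟩
  refine Finset.sum_congr rfl fun G _ => ?_
  have hfac : (∑ u : ∀ i, Xa i, ∑ w : ∀ i, Xa i,
      (if jump G u w x0 = -1 then ρ G / (4 * N) * z u * z w else 0))
      = ρ G / (4 * N) * ∑ u : ∀ i, Xa i, ∑ w : ∀ i, Xa i,
          (if jump G u w x0 = -1 then z u * z w else 0) := by
    simp only [Finset.mul_sum, mul_ite, mul_zero, mul_assoc]
  rw [hfac, key G, hE]
  have hN' : N ≠ 0 := ne_of_gt hN
  field_simp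
  ring

end MoranRecomb
end
end

section
/- Let {A_1,…,A_m} be a partition of S into nonempty blocks, fix a reference type x° ∈ X, and let f(z) := ∏_{ℓ=1}^m [A_ℓ]_z. Then for every z : X → ℤ, the mutation generator satisfies (Mf)(z) = ∑_{ℓ=1}^m (∏_{i≠ℓ} [A_i]_z) · ( ∑_{j∈A_ℓ} ∑_{a∈X_j} ( μ^j_{a, x°_j} · [A_ℓ∖{j}; j↦a]_z − μ^j_{x°_j, a} · [A_ℓ]_z ) ), where [A_ℓ∖{j}; j↦a]_z denotes the number of individuals that agree with x° at all sites of A_ℓ∖{j} and carry allele a at site j. In particular, d/dt E[∏_ℓ [A_ℓ]_t] under mutation alone is a linear expression in expectations of products of marginal counts, so adding mutation to recombination preserves exact moment closure. -/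
open scoped Classical

noncomputable section

namespace MoranRecomb

variable {n : ℕ} {Xa : Fin n → Type*}

/-- The mutation generator `M`. -/
def mutGen [∀ i, Fintype (Xa i)] (μ : ∀ i, Xa i → Xa i → ℝ)
    (f : ((∀ i, Xa i) → ℤ) → ℝ) (z : (∀ i, Xa i) → ℤ) : ℝ :=
  ∑ i : Fin n, ∑ x : ∀ j, Xa j, ∑ b : Xa i,
    μ i (x i) b * (z x : ℝ) * (f (z - delta x + delta (Function.update x i b)) - f z)

/-- `[A; ξ]_z = (π_A.z)(π_A(ξ))` of an integer configuration, as a real number. -/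
def margRZ [∀ i, Fintype (Xa i)] (A : Finset (Fin n)) (z : (∀ i, Xa i) → ℤ)
    (u : ∀ i, Xa i) : ℝ :=
  ∑ y : ∀ i, Xa i, if ∀ i ∈ A, y i = u i then (z y : ℝ) else 0

lemma delta_sum' [∀ i, Fintype (Xa i)] (A : Finset (Fin n)) (u x : ∀ i, Xa i) :
    ∑ y : ∀ i, Xa i, (if ∀ i ∈ A, y i = u i then ((delta x y : ℤ) : ℝ) else 0)
      = if ∀ i ∈ A, x i = u i then 1 else 0 := by
  have h : ∀ y : ∀ i, Xa i, (if ∀ i ∈ A, y i = u i then ((delta x y : ℤ) : ℝ) else 0)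
      = if y = x then (if ∀ i ∈ A, y i = u i then (1:ℝ) else 0) else 0 := by
    intro y
    unfold delta
    by_cases hp : ∀ i ∈ A, y i = u i <;> by_cases hy : y = x <;>
      simp [hp, hy]
  simp_rw [h]
  simp [Finset.sum_ite_eq' Finset.univ x]

lemma margRZ_step [∀ i, Fintype (Xa i)] (A : Finset (Fin n)) (z : (∀ i, Xa i) → ℤ)
    (x x' u : ∀ i, Xa i) :
    margRZ A (z - delta x + delta x') u
      = margRZ A z u + ((if ∀ i ∈ A, x' i = u i then (1:ℝ) else 0)
          - if ∀ i ∈ A, x i = u i then 1 else 0) := by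
  unfold margRZ
  have h : ∀ y : ∀ i, Xa i,
      (if (∀ i ∈ A, y i = u i) then (((z - delta x + delta x') y : ℤ) : ℝ) else 0)
        = ((if (∀ i ∈ A, y i = u i) then (z y : ℝ) else 0)
            - (if (∀ i ∈ A, y i = u i) then ((delta x y : ℤ) : ℝ) else 0))
          + (if (∀ i ∈ A, y i = u i) then ((delta x' y : ℤ) : ℝ) else 0) := by
    intro y
    by_cases hc : ∀ i ∈ A, y i = u i
    · simp only [if_pos hc, Pi.add_apply, Pi.sub_apply]
      push_cast
      ring
    · simp only [if_neg hc]
      ring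
  simp_rw [h]
  rw [Finset.sum_add_distrib, Finset.sum_sub_distrib,
      delta_sum' A u x, delta_sum' A u x']
  ring

/-- The mutation generator applied to a product of marginal counts along a partition
`{A_1,…,A_m}` of the sites: `(Mf)(z)` is a linear expression in products of marginal
counts, where `[A_ℓ∖{j}; j↦a]_z = (π_{A_ℓ}.z)(π_{A_ℓ}(x°^{j→a}))` counts individuals
agreeing with `x°` on `A_ℓ∖{j}` and carrying allele `a` at site `j`.  Hence adding
mutation to recombination preserves exact moment closure. -/

theorem mutation_product_dynamics {m : ℕ} (hn : 1 ≤ n) (hm : 1 ≤ m)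
    [∀ i, Fintype (Xa i)] [∀ i, Nonempty (Xa i)]
    (A : Fin m → Finset (Fin n))
    (hA1 : ∀ ℓ, (A ℓ).Nonempty)
    (hA2 : ∀ k l, k ≠ l → Disjoint (A k) (A l))
    (hA3 : Finset.univ.biUnion A = Finset.univ)
    (μ : ∀ i, Xa i → Xa i → ℝ) (hμ0 : ∀ i a c, 0 ≤ μ i a c) (hμd : ∀ i a, μ i a a = 0)
    (x0 : ∀ i, Xa i) (z : (∀ i, Xa i) → ℤ) :
    mutGen μ (fun w => ∏ ℓ : Fin m, margRZ (A ℓ) w x0) z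
      = ∑ ℓ : Fin m, (∏ i ∈ Finset.univ.erase ℓ, margRZ (A i) z x0) *
          (∑ j ∈ A ℓ, ∑ a : Xa j,
            (μ j a (x0 j) * margRZ (A ℓ) z (Function.update x0 j a)
              - μ j (x0 j) a * margRZ (A ℓ) z x0)) := by
  unfold mutGen
  have hsplit : ∀ F : (i : Fin n) → ℝ, ∑ i : Fin n, F i = ∑ ℓ : Fin m, ∑ j ∈ A ℓ, F j := by
    intro F
    rw [← hA3]
    exact Finset.sum_biUnion (fun k _ l _ hkl => hA2 k l hkl)
  rw [hsplit]
  refine Finset.sum_congr rfl fun ℓ _ => ?_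
  rw [Finset.mul_sum]
  refine Finset.sum_congr rfl fun j hjℓ => ?_
  set P : ℝ := ∏ k ∈ Finset.univ.erase ℓ, margRZ (A k) z x0 with hP
  have key : ∀ (x : ∀ i, Xa i) (b : Xa j),
      (∏ k : Fin m, margRZ (A k) (z - delta x + delta (Function.update x j b)) x0)
        - ∏ k : Fin m, margRZ (A k) z x0
      = ((if ∀ i ∈ A ℓ, Function.update x j b i = x0 i then (1:ℝ) else 0)
          - if ∀ i ∈ A ℓ, x i = x0 i then 1 else 0) * P := by
    intro x b
    have hothers : ∀ k ∈ Finset.univ.erase ℓ,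
        margRZ (A k) (z - delta x + delta (Function.update x j b)) x0
          = margRZ (A k) z x0 := by
      intro k hk
      have hkℓ : k ≠ ℓ := Finset.ne_of_mem_erase hk
      have hjA : j ∉ A k := fun hjk =>
        (Finset.disjoint_left.mp (hA2 k ℓ hkℓ) hjk) hjℓ
      have heq : ∀ i ∈ A k, Function.update x j b i = x i := by
        intro i hi
        refine Function.update_of_ne (fun e => hjA ?_) b x
        rwa [e] at hi
      have hcond : (∀ i ∈ A k, Function.update x j b i = x0 i)
          ↔ (∀ i ∈ A k, x i = x0 i) := by
        refine ⟨fun h i hi => ?_, fun h i hi => ?_⟩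
        · rw [← heq i hi]; exact h i hi
        · rw [heq i hi]; exact h i hi
      rw [margRZ_step]
      simp [hcond]
    rw [← Finset.mul_prod_erase _ _ (Finset.mem_univ ℓ),
        ← Finset.mul_prod_erase _ (fun k => margRZ (A k) z x0) (Finset.mem_univ ℓ),
        Finset.prod_congr rfl hothers, margRZ_step]
    ring
  simp_rw [key]
  have pullP : ∑ x : ∀ i, Xa i, ∑ b : Xa j, μ j (x j) b * (z x : ℝ) *
        (((if ∀ i ∈ A ℓ, Function.update x j b i = x0 i then (1:ℝ) else 0)
          - if ∀ i ∈ A ℓ, x i = x0 i then 1 else 0) * P)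
      = (∑ x : ∀ i, Xa i, ∑ b : Xa j, μ j (x j) b * (z x : ℝ) *
        ((if ∀ i ∈ A ℓ, Function.update x j b i = x0 i then (1:ℝ) else 0)
          - if ∀ i ∈ A ℓ, x i = x0 i then 1 else 0)) * P := by
    rw [Finset.sum_mul]
    refine Finset.sum_congr rfl fun x _ => ?_
    rw [Finset.sum_mul]
    refine Finset.sum_congr rfl fun b _ => ?_
    ring
  rw [pullP]
  -- now the inner identity
  have hiff1 : ∀ (x : ∀ i, Xa i) (b : Xa j),
      (∀ i ∈ A ℓ, Function.update x j b i = x0 i)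
        ↔ (b = x0 j ∧ ∀ i ∈ A ℓ, i ≠ j → x i = x0 i) := by
    intro x b
    constructor
    · intro h
      refine ⟨?_, fun i hi hij => ?_⟩
      · have := h j hjℓ; rwa [Function.update_self] at this
      · have := h i hi; rwa [Function.update_of_ne hij] at this
    · rintro ⟨hb, h⟩ i hi
      by_cases hij : i = j
      · subst hij; rwa [Function.update_self]
      · rw [Function.update_of_ne hij]; exact h i hi hij
  have hiff2 : ∀ (a : Xa j) (y : ∀ i, Xa i),
      (∀ i ∈ A ℓ, y i = Function.update x0 j a i)
        ↔ (y j = a ∧ ∀ i ∈ A ℓ, i ≠ j → y i = x0 i) := by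
    intro a y
    constructor
    · intro h
      refine ⟨?_, fun i hi hij => ?_⟩
      · have := h j hjℓ; rwa [Function.update_self] at this
      · have := h i hi; rwa [Function.update_of_ne hij] at this
    · rintro ⟨hb, h⟩ i hi
      by_cases hij : i = j
      · subst hij; rwa [Function.update_self]
      · rw [Function.update_of_ne hij]; exact h i hi hij
  have hS1 : ∑ x : ∀ i, Xa i, ∑ b : Xa j, μ j (x j) b * (z x : ℝ) *
        (if ∀ i ∈ A ℓ, Function.update x j b i = x0 i then (1:ℝ) else 0)
      = ∑ a : Xa j, μ j a (x0 j) * margRZ (A ℓ) z (Function.update x0 j a) := by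
    have lhs1 : ∀ x : ∀ i, Xa i, ∑ b : Xa j, μ j (x j) b * (z x : ℝ) *
          (if ∀ i ∈ A ℓ, Function.update x j b i = x0 i then (1:ℝ) else 0)
        = μ j (x j) (x0 j) * (z x : ℝ) *
          (if ∀ i ∈ A ℓ, i ≠ j → x i = x0 i then (1:ℝ) else 0) := by
      intro x
      have h : ∀ b : Xa j, μ j (x j) b * (z x : ℝ) *
            (if ∀ i ∈ A ℓ, Function.update x j b i = x0 i then (1:ℝ) else 0)
          = if b = x0 j then (μ j (x j) b * (z x : ℝ) *
              (if ∀ i ∈ A ℓ, i ≠ j → x i = x0 i then (1:ℝ) else 0)) else 0 := by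
        intro b
        by_cases hb : b = x0 j
        · simp only [if_pos hb]
          by_cases hq : ∀ i ∈ A ℓ, i ≠ j → x i = x0 i
          · rw [if_pos ((hiff1 x b).mpr ⟨hb, hq⟩), if_pos hq]
          · rw [if_neg (fun h' => hq ((hiff1 x b).mp h').2), if_neg hq]
        · rw [if_neg hb, if_neg (fun h' => hb ((hiff1 x b).mp h').1), mul_zero]
      simp_rw [h]
      rw [Finset.sum_ite_eq' Finset.univ (x0 j)]
      simp
    simp_rw [lhs1]
    have rhs1 : ∀ a : Xa j, μ j a (x0 j) * margRZ (A ℓ) z (Function.update x0 j a)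
        = ∑ y : ∀ i, Xa i, (if y j = a then (μ j a (x0 j) *
            (if ∀ i ∈ A ℓ, i ≠ j → y i = x0 i then (z y : ℝ) else 0)) else 0) := by
      intro a
      unfold margRZ
      rw [Finset.mul_sum]
      refine Finset.sum_congr rfl fun y _ => ?_
      by_cases hy : y j = a
      · rw [if_pos hy]
        by_cases hq : ∀ i ∈ A ℓ, i ≠ j → y i = x0 i
        · rw [if_pos ((hiff2 a y).mpr ⟨hy, hq⟩), if_pos hq]
        · rw [if_neg (fun h' => hq ((hiff2 a y).mp h').2), if_neg hq, mul_zero]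
      · rw [if_neg hy, if_neg (fun h' => hy ((hiff2 a y).mp h').1), mul_zero]
    simp_rw [rhs1]
    rw [Finset.sum_comm]
    refine Finset.sum_congr rfl fun y _ => ?_
    rw [Finset.sum_ite_eq Finset.univ (y j)]
    simp only [Finset.mem_univ, if_true]
    by_cases hq : ∀ i ∈ A ℓ, i ≠ j → y i = x0 i
    · rw [if_pos hq, if_pos hq]; ring
    · rw [if_neg hq, if_neg hq]; ring
  have hS2 : ∑ x : ∀ i, Xa i, ∑ b : Xa j, μ j (x j) b * (z x : ℝ) *
        (if ∀ i ∈ A ℓ, x i = x0 i then (1:ℝ) else 0)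
      = ∑ a : Xa j, μ j (x0 j) a * margRZ (A ℓ) z x0 := by
    have lhs2 : ∀ x : ∀ i, Xa i, ∑ b : Xa j, μ j (x j) b * (z x : ℝ) *
          (if ∀ i ∈ A ℓ, x i = x0 i then (1:ℝ) else 0)
        = (∑ b : Xa j, μ j (x0 j) b) * (if ∀ i ∈ A ℓ, x i = x0 i then (z x : ℝ) else 0) := by
      intro x
      by_cases hc : ∀ i ∈ A ℓ, x i = x0 i
      · simp only [if_pos hc, mul_one]
        rw [hc j hjℓ, Finset.sum_mul]
      · simp only [if_neg hc, mul_zero]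
        simp
    simp_rw [lhs2]
    rw [← Finset.mul_sum, ← Finset.sum_mul]
    rfl
  calc (∑ x : ∀ i, Xa i, ∑ b : Xa j, μ j (x j) b * (z x : ℝ) *
        ((if ∀ i ∈ A ℓ, Function.update x j b i = x0 i then (1:ℝ) else 0)
          - if ∀ i ∈ A ℓ, x i = x0 i then 1 else 0)) * P
      = ((∑ x : ∀ i, Xa i, ∑ b : Xa j, μ j (x j) b * (z x : ℝ) *
          (if ∀ i ∈ A ℓ, Function.update x j b i = x0 i then (1:ℝ) else 0))
        - ∑ x : ∀ i, Xa i, ∑ b : Xa j, μ j (x j) b * (z x : ℝ) *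
          (if ∀ i ∈ A ℓ, x i = x0 i then (1:ℝ) else 0)) * P := by
        rw [← Finset.sum_sub_distrib]
        congr 1
        refine Finset.sum_congr rfl fun x _ => ?_
        rw [← Finset.sum_sub_distrib]
        refine Finset.sum_congr rfl fun b _ => ?_
        ring
    _ = P * ∑ a : Xa j, (μ j a (x0 j) * margRZ (A ℓ) z (Function.update x0 j a)
          - μ j (x0 j) a * margRZ (A ℓ) z x0) := by
        rw [hS1, hS2, ← Finset.sum_sub_distrib, mul_comm]


end MoranRecomb
end
end

section
/- Let E = {z : X → ℕ, ∑_y z(y) = N} be the state space of the Moran model with recombination and mutation. Let W be the real linear span, inside the space of functions E → ℝ, of all functions of the form z ↦ ∏_{A∈𝒜} (π_A.z)(ξ_A), where 𝒜 ranges over the finite families of pairwise disjoint nonempty subsets of S (including the empty family, giving the constant function 1) and ξ_A ∈ X_A are arbitrary marginal types. Then W is invariant under the combined recombination–mutation generator: for every f ∈ W, (𝒢 + M)f ∈ W. In particular, for the Moran model with recombination and mutation the hierarchy of expectations of products of marginal counts closes after finitely many steps. -/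
set_option linter.unusedSectionVars false
set_option maxHeartbeats 1000000


open scoped Classical

noncomputable section

namespace MoranRecomb

variable {n : ℕ} {Xa : Fin n → Type*}

/-- The state space `E` of the Moran model: counting measures of total mass `N`. -/
def stateSpace [∀ i, Fintype (Xa i)] (N : ℕ) : Type _ :=
  {z : (∀ i, Xa i) → ℤ // (∀ y, 0 ≤ z y) ∧ ∑ y : ∀ i, Xa i, z y = N}

/-- The recombination generator acting on functions of the state space `E` (transitions
with nonzero rate preserve `E`; the remaining ones contribute `0`). -/
def recGenE [∀ i, Fintype (Xa i)] (ρ : Finset (Fin n) → ℝ) (N : ℕ)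
    (f : stateSpace (Xa := Xa) N → ℝ) (z : stateSpace (Xa := Xa) N) : ℝ :=
  ∑ G : Finset (Fin n), ∑ x : ∀ i, Xa i, ∑ y : ∀ i, Xa i,
    ρ G / (4 * N) * (z.val x : ℝ) * (z.val y : ℝ) *
      (if h : (∀ w, 0 ≤ (z.val + jump G x y) w) ∧
          ∑ w : ∀ i, Xa i, (z.val + jump G x y) w = N
        then f ⟨z.val + jump G x y, h⟩ - f z else 0)

/-- The mutation generator acting on functions of the state space `E`. -/
def mutGenE [∀ i, Fintype (Xa i)] (μ : ∀ i, Xa i → Xa i → ℝ) (N : ℕ)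
    (f : stateSpace (Xa := Xa) N → ℝ) (z : stateSpace (Xa := Xa) N) : ℝ :=
  ∑ i : Fin n, ∑ x : ∀ j, Xa j, ∑ b : Xa i,
    μ i (x i) b * (z.val x : ℝ) *
      (if h : (∀ w, 0 ≤ (z.val - delta x + delta (Function.update x i b)) w) ∧
          ∑ w : ∀ i, Xa i, (z.val - delta x + delta (Function.update x i b)) w = N
        then f ⟨z.val - delta x + delta (Function.update x i b), h⟩ - f z else 0)


/-! ### Constraint sets -/

def indC (cs : Finset ((i : Fin n) × Xa i)) (x : ∀ i, Xa i) : ℝ :=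
  if ∀ p ∈ cs, x p.1 = p.2 then 1 else 0

def msum [∀ i, Fintype (Xa i)] (cs : Finset ((i : Fin n) × Xa i))
    (z : (∀ i, Xa i) → ℤ) : ℝ :=
  ∑ x : ∀ i, Xa i, (z x : ℝ) * indC cs x

def sites (cs : Finset ((i : Fin n) × Xa i)) : Finset (Fin n) := cs.image Sigma.fst

def toCS (B : Finset (Fin n)) (u : ∀ i, Xa i) : Finset ((i : Fin n) × Xa i) :=
  B.image fun i => ⟨i, u i⟩

lemma indC_empty (x : ∀ i, Xa i) : indC ∅ x = 1 := by simp [indC]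

lemma indC_union (cs cs' : Finset ((i : Fin n) × Xa i)) (x : ∀ i, Xa i) :
    indC (cs ∪ cs') x = indC cs x * indC cs' x := by
  unfold indC
  have : (∀ p ∈ cs ∪ cs', x p.1 = p.2) ↔ (∀ p ∈ cs, x p.1 = p.2) ∧ ∀ p ∈ cs', x p.1 = p.2 := by
    constructor
    · exact fun h => ⟨fun p hp => h p (Finset.mem_union_left _ hp),
        fun p hp => h p (Finset.mem_union_right _ hp)⟩
    · rintro ⟨h1, h2⟩ p hp
      rcases Finset.mem_union.1 hp with hp | hp
      · exact h1 p hp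
      · exact h2 p hp
  rw [if_congr this rfl rfl]
  by_cases h1 : ∀ p ∈ cs, x p.1 = p.2 <;> by_cases h2 : ∀ p ∈ cs', x p.1 = p.2
  · rw [if_pos ⟨h1, h2⟩, if_pos h1, if_pos h2, mul_one]
  · rw [if_neg (by tauto), if_pos h1, if_neg h2, mul_zero]
  · rw [if_neg (by tauto), if_neg h1, zero_mul]
  · rw [if_neg (by tauto), if_neg h1, zero_mul]

lemma prod_indC {ι : Type*} (s : Finset ι) (cs : ι → Finset ((i : Fin n) × Xa i))
    (x : ∀ i, Xa i) : ∏ ℓ ∈ s, indC (cs ℓ) x = indC (s.sup cs) x := by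
  induction s using Finset.cons_induction with
  | empty => simp [indC_empty]
  | cons a s ha ih => rw [Finset.prod_cons, ih, Finset.sup_cons, ← indC_union]; rfl

lemma sites_toCS (B : Finset (Fin n)) (u : ∀ i, Xa i) : sites (toCS B u) = B := by
  ext i
  simp [sites, toCS, Finset.mem_image]

lemma sites_union (cs cs' : Finset ((i : Fin n) × Xa i)) :
    sites (cs ∪ cs') = sites cs ∪ sites cs' := Finset.image_union _ _

lemma sites_sup {ι : Type*} (s : Finset ι) (cs : ι → Finset ((i : Fin n) × Xa i)) :
    sites (s.sup cs) = s.sup fun ℓ => sites (cs ℓ) := by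
  induction s using Finset.cons_induction with
  | empty => simp [sites]
  | cons a s ha ih =>
    rw [Finset.sup_cons, Finset.sup_cons, ← ih]
    show sites (cs a ∪ _) = sites (cs a) ∪ _
    exact sites_union _ _

lemma indC_toCS (B : Finset (Fin n)) (u x : ∀ i, Xa i) :
    indC (toCS B u) x = if ∀ i ∈ B, x i = u i then 1 else 0 := by
  unfold indC toCS
  congr 1
  simp

lemma msum_toCS [∀ i, Fintype (Xa i)] (B : Finset (Fin n)) (u : ∀ i, Xa i)
    (z : (∀ i, Xa i) → ℤ) : msum (toCS B u) z = margRZ B z u := by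
  unfold msum margRZ
  refine Finset.sum_congr rfl fun y _ => ?_
  rw [indC_toCS]
  split <;> simp

section
variable [∀ i, Fintype (Xa i)]

lemma margRZ_add (A : Finset (Fin n)) (z w : (∀ i, Xa i) → ℤ) (u : ∀ i, Xa i) :
    margRZ A (z + w) u = margRZ A z u + margRZ A w u := by
  unfold margRZ
  rw [← Finset.sum_add_distrib]
  refine Finset.sum_congr rfl fun y _ => ?_
  split <;> simp

lemma margRZ_sub (A : Finset (Fin n)) (z w : (∀ i, Xa i) → ℤ) (u : ∀ i, Xa i) :
    margRZ A (z - w) u = margRZ A z u - margRZ A w u := by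
  unfold margRZ
  rw [← Finset.sum_sub_distrib]
  refine Finset.sum_congr rfl fun y _ => ?_
  split <;> simp

lemma margRZ_delta (A : Finset (Fin n)) (w u : ∀ i, Xa i) :
    margRZ A (delta w) u = indC (toCS A u) w := by
  unfold margRZ
  rw [indC_toCS]
  rw [Finset.sum_eq_single w]
  · simp [delta]
  · intro y _ hy
    simp [delta, hy]
  · simp

lemma indC_toCS_recMap (A G : Finset (Fin n)) (u x y : ∀ i, Xa i) :
    indC (toCS A u) (recMap G x y) =
      indC (toCS (A ∩ G) u) x * indC (toCS (A \ G) u) y := by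
  rw [indC_toCS, indC_toCS, indC_toCS]
  have : (∀ i ∈ A, recMap G x y i = u i) ↔
      (∀ i ∈ A ∩ G, x i = u i) ∧ ∀ i ∈ A \ G, y i = u i := by
    constructor
    · intro h
      refine ⟨fun i hi => ?_, fun i hi => ?_⟩
      · have := h i (Finset.mem_inter.1 hi).1
        simpa [recMap, (Finset.mem_inter.1 hi).2] using this
      · have hm := Finset.mem_sdiff.1 hi
        have := h i hm.1
        simpa [recMap, hm.2] using this
    · rintro ⟨h1, h2⟩ i hi
      by_cases hG : i ∈ G
      · have := h1 i (Finset.mem_inter.2 ⟨hi, hG⟩)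
        simpa [recMap, hG] using this
      · have := h2 i (Finset.mem_sdiff.2 ⟨hi, hG⟩)
        simpa [recMap, hG] using this
  rw [if_congr this rfl rfl]
  by_cases h1 : ∀ i ∈ A ∩ G, x i = u i <;> by_cases h2 : ∀ i ∈ A \ G, y i = u i
  · rw [if_pos ⟨h1, h2⟩, if_pos h1, if_pos h2, mul_one]
  · rw [if_neg (by tauto), if_pos h1, if_neg h2, mul_zero]
  · rw [if_neg (by tauto), if_neg h1, zero_mul]
  · rw [if_neg (by tauto), if_neg h1, zero_mul]

lemma recMap_compl (G : Finset (Fin n)) (x y : ∀ i, Xa i) :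
    recMap Gᶜ x y = recMap G y x := by
  funext i
  by_cases h : i ∈ G <;> simp [recMap, h]

lemma margRZ_jump (A G : Finset (Fin n)) (x y u : ∀ i, Xa i) :
    margRZ A (jump G x y) u =
      indC (toCS (A ∩ G) u) x * indC (toCS (A \ G) u) y
      + indC (toCS (A ∩ G) u) y * indC (toCS (A \ G) u) x
      - indC (toCS A u) x - indC (toCS A u) y := by
  have hj : jump G x y =
      delta (recMap G x y) + delta (recMap Gᶜ x y) - delta x - delta y := rfl
  rw [hj, margRZ_sub, margRZ_sub, margRZ_add, margRZ_delta, margRZ_delta,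
    margRZ_delta, margRZ_delta, recMap_compl, indC_toCS_recMap, indC_toCS_recMap]


lemma indC_insert (p : (i : Fin n) × Xa i) (cs : Finset ((i : Fin n) × Xa i))
    (x : ∀ i, Xa i) :
    indC (insert p cs) x = (if x p.1 = p.2 then 1 else 0) * indC cs x := by
  rw [Finset.insert_eq, indC_union]
  congr 1
  simp [indC]

lemma sites_insert (p : (i : Fin n) × Xa i) (cs : Finset ((i : Fin n) × Xa i)) :
    sites (insert p cs) = insert p.1 (sites cs) := by
  simp [sites, Finset.image_insert]

lemma indC_update (A : Finset (Fin n)) (u x : ∀ i, Xa i) (i : Fin n) (b : Xa i) :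
    indC (toCS A u) (Function.update x i b) =
      (if i ∈ A then (if b = u i then (1:ℝ) else 0) else 1) *
        indC (toCS (A.erase i) u) x := by
  rw [indC_toCS, indC_toCS]
  have hiff : (∀ j ∈ A, Function.update x i b j = u j) ↔
      ((i ∈ A → b = u i) ∧ ∀ j ∈ A.erase i, x j = u j) := by
    constructor
    · intro h
      refine ⟨fun hi => by simpa using h i hi, fun j hj => ?_⟩
      have hm := Finset.mem_erase.1 hj
      have := h j hm.2
      rwa [Function.update_of_ne hm.1] at this
    · rintro ⟨h1, h2⟩ j hj
      by_cases hji : j = i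
      · subst hji
        simpa using h1 hj
      · rw [Function.update_of_ne hji]
        exact h2 j (Finset.mem_erase.2 ⟨hji, hj⟩)
  rw [if_congr hiff rfl rfl]
  by_cases hiA : i ∈ A
  · by_cases hb : b = u i
    · by_cases h2 : ∀ j ∈ A.erase i, x j = u j
      · rw [if_pos ⟨fun _ => hb, h2⟩, if_pos hiA, if_pos hb, if_pos h2, mul_one]
      · rw [if_neg (by tauto), if_pos hiA, if_pos hb, if_neg h2, mul_zero]
    · rw [if_neg (by tauto), if_pos hiA, if_neg hb, zero_mul]
  · by_cases h2 : ∀ j ∈ A.erase i, x j = u j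
    · rw [if_pos ⟨fun h => absurd h hiA, h2⟩, if_neg hiA, if_pos h2, mul_one]
    · rw [if_neg (by tauto), if_neg hiA, if_neg h2, one_mul]

lemma msum_rep [∀ i, Nonempty (Xa i)] (cs : Finset ((i : Fin n) × Xa i)) :
    (∀ z, msum (Xa := Xa) cs z = 0) ∨
      ∃ u, ∀ z, msum (Xa := Xa) cs z = margRZ (sites cs) z u := by
  by_cases hfun : ∀ p ∈ cs, ∀ q ∈ cs, p.1 = q.1 → p = q
  · right
    refine ⟨fun i => if h : ∃ a : Xa i, (⟨i, a⟩ : (i : Fin n) × Xa i) ∈ cs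
      then h.choose else Classical.arbitrary _, fun z => ?_⟩
    set u : ∀ i, Xa i := fun i => if h : ∃ a : Xa i, (⟨i, a⟩ : (i : Fin n) × Xa i) ∈ cs
      then h.choose else Classical.arbitrary _ with hu
    have key : ∀ p ∈ cs, u p.1 = p.2 := by
      rintro ⟨i, a⟩ hp
      have hex : ∃ a' : Xa i, (⟨i, a'⟩ : (i : Fin n) × Xa i) ∈ cs := ⟨a, hp⟩
      have : u i = hex.choose := by rw [hu]; exact dif_pos hex
      rw [this]
      have := hfun _ hex.choose_spec _ hp rfl
      exact (Sigma.mk.inj_iff.1 this).2.eq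
    unfold msum margRZ
    refine Finset.sum_congr rfl fun x _ => ?_
    have hiff : (∀ p ∈ cs, x p.1 = p.2) ↔ ∀ i ∈ sites cs, x i = u i := by
      constructor
      · intro h i hi
        obtain ⟨p, hp, rfl⟩ := Finset.mem_image.1 hi
        rw [h p hp, key p hp]
      · intro h p hp
        rw [h p.1 (Finset.mem_image_of_mem _ hp), key p hp]
    unfold indC
    by_cases hc : ∀ p ∈ cs, x p.1 = p.2
    · rw [if_pos hc, if_pos (hiff.1 hc), mul_one]
    · rw [if_neg hc, if_neg fun h => hc (hiff.2 h), mul_zero]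
  · left
    push_neg at hfun
    obtain ⟨p, hp, q, hq, hpq, hne⟩ := hfun
    intro z
    unfold msum
    refine Finset.sum_eq_zero fun x _ => ?_
    have : ¬ ∀ r ∈ cs, x r.1 = r.2 := by
      intro h
      obtain ⟨i, a⟩ := p
      obtain ⟨i', a'⟩ := q
      cases hpq
      exact hne (by rw [show a = a' from (h _ hp).symm.trans (h _ hq)])
    rw [indC, if_neg this, mul_zero]

end

section
variable [∀ i, Fintype (Xa i)] [∀ i, Nonempty (Xa i)]


def genSet (N : ℕ) : Set (stateSpace (Xa := Xa) N → ℝ) :=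
  {g | ∃ (m : ℕ) (A : Fin m → Finset (Fin n)) (ξ : Fin m → ∀ i, Xa i),
    (∀ ℓ, (A ℓ).Nonempty) ∧
    (∀ k l, k ≠ l → Disjoint (A k) (A l)) ∧
    g = fun z => ∏ ℓ : Fin m, margRZ (A ℓ) z.val (ξ ℓ)}

variable {N : ℕ}

lemma margRZ_empty (z : stateSpace (Xa := Xa) N) (u : ∀ i, Xa i) :
    margRZ ∅ z.val u = (N : ℝ) := by
  unfold margRZ
  simp only [Finset.notMem_empty, false_implies, implies_true, if_true]
  rw [← Int.cast_sum, z.2.2, Int.cast_natCast]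

lemma prodMarg_mem {ι : Type} (s : Finset ι) (B : ι → Finset (Fin n))
    (u : ι → ∀ i, Xa i)
    (hd : ∀ k ∈ s, ∀ l ∈ s, k ≠ l → Disjoint (B k) (B l)) :
    (fun z : stateSpace (Xa := Xa) N => ∏ k ∈ s, margRZ (B k) z.val (u k)) ∈
      Submodule.span ℝ (genSet (Xa := Xa) N) := by
  set t := s.filter (fun k => (B k).Nonempty) with ht
  have hts : t ⊆ s := Finset.filter_subset _ _
  have hsplit : (fun z : stateSpace (Xa := Xa) N =>
      ∏ k ∈ s, margRZ (B k) z.val (u k)) =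
      ((N : ℝ) ^ ((s \ t).card)) •
        fun z : stateSpace (Xa := Xa) N => ∏ k ∈ t, margRZ (B k) z.val (u k) := by
    funext z
    rw [Pi.smul_apply, smul_eq_mul, ← Finset.prod_sdiff hts]
    congr 1
    rw [Finset.prod_congr rfl (fun k hk => ?_), Finset.prod_const]
    have hk' := Finset.mem_sdiff.1 hk
    have : B k = ∅ := by
      by_contra hne
      exact hk'.2 (Finset.mem_filter.2 ⟨hk'.1,
        Finset.nonempty_iff_ne_empty.2 hne⟩)
    rw [this, margRZ_empty]
  rw [hsplit]
  refine Submodule.smul_mem _ _ (Submodule.subset_span ?_)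
  set e := t.equivFin with he
  refine ⟨t.card, fun j => B (e.symm j).1, fun j => u (e.symm j).1, ?_, ?_, ?_⟩
  · intro j
    exact (Finset.mem_filter.1 (e.symm j).2).2
  · intro k l hkl
    refine hd _ (hts (e.symm k).2) _ (hts (e.symm l).2) ?_
    intro hval
    exact hkl (e.symm.injective (Subtype.ext hval))
  · funext z
    rw [← Finset.prod_attach t (fun k => margRZ (B k) z.val (u k)),
      ← Finset.univ_eq_attach, ← Equiv.prod_comp e.symm]

lemma prodMsum_mem {ι : Type} (s : Finset ι) (cs : ι → Finset ((i : Fin n) × Xa i))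
    (hd : ∀ k ∈ s, ∀ l ∈ s, k ≠ l → Disjoint (sites (cs k)) (sites (cs l))) :
    (fun z : stateSpace (Xa := Xa) N => ∏ k ∈ s, msum (cs k) z.val) ∈
      Submodule.span ℝ (genSet (Xa := Xa) N) := by
  by_cases hz : ∃ k ∈ s, ∀ z, msum (Xa := Xa) (cs k) z = 0
  · obtain ⟨k, hk, h0⟩ := hz
    have : (fun z : stateSpace (Xa := Xa) N => ∏ k ∈ s, msum (cs k) z.val) = 0 :=
      funext fun z => Finset.prod_eq_zero hk (h0 _)
    rw [this]
    exact Submodule.zero_mem _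
  · push_neg at hz
    have hrep : ∀ k, ∃ u, k ∈ s → ∀ z, msum (Xa := Xa) (cs k) z =
        margRZ (sites (cs k)) z u := by
      intro k
      by_cases hk : k ∈ s
      · obtain ⟨u, hu⟩ := (msum_rep (cs k)).resolve_left (by
          obtain ⟨z0, hz0⟩ := hz k hk
          exact fun hall => hz0 (hall z0))
        exact ⟨u, fun _ => hu⟩
      · exact ⟨fun i => Classical.arbitrary _, fun h => absurd h hk⟩
    choose u hu using hrep
    have : (fun z : stateSpace (Xa := Xa) N => ∏ k ∈ s, msum (cs k) z.val) =
        fun z : stateSpace (Xa := Xa) N =>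
          ∏ k ∈ s, margRZ (sites (cs k)) z.val (u k) :=
      funext fun z => Finset.prod_congr rfl fun k hk => hu k hk z.val
    rw [this]
    exact prodMarg_mem s _ u hd

end

/-! ### Four-term decomposition of recombination jumps -/

def sgn4 : Fin 4 → ℝ := ![1, 1, -1, -1]

def CXf (G A : Finset (Fin n)) (u : ∀ i, Xa i) : Fin 4 → Finset ((i : Fin n) × Xa i) :=
  ![toCS (A ∩ G) u, toCS (A \ G) u, toCS A u, ∅]

def CYf (G A : Finset (Fin n)) (u : ∀ i, Xa i) : Fin 4 → Finset ((i : Fin n) × Xa i) :=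
  ![toCS (A \ G) u, toCS (A ∩ G) u, ∅, toCS A u]

lemma sites_empty : sites (∅ : Finset ((i : Fin n) × Xa i)) = ∅ := by
  simp [sites]

lemma sites_CXf_subset (G A : Finset (Fin n)) (u : ∀ i, Xa i) (c : Fin 4) :
    sites (CXf G A u c) ⊆ A := by
  fin_cases c <;>
    simp [CXf, sites_toCS, sites_empty, Finset.inter_subset_left, Finset.sdiff_subset]

lemma sites_CYf_subset (G A : Finset (Fin n)) (u : ∀ i, Xa i) (c : Fin 4) :
    sites (CYf G A u c) ⊆ A := by
  fin_cases c <;>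
    simp [CYf, sites_toCS, sites_empty, Finset.inter_subset_left, Finset.sdiff_subset]

lemma disj_inter_sdiff (A G : Finset (Fin n)) : Disjoint (A ∩ G) (A \ G) := by
  rw [Finset.disjoint_left]
  intro i hi hj
  exact (Finset.mem_sdiff.1 hj).2 (Finset.mem_inter.1 hi).2

lemma disj_CXY (G A : Finset (Fin n)) (u : ∀ i, Xa i) (c : Fin 4) :
    Disjoint (sites (CXf G A u c)) (sites (CYf G A u c)) := by
  fin_cases c <;>
    simp [CXf, CYf, sites_toCS, sites_empty]
  · exact disj_inter_sdiff A G
  · exact (disj_inter_sdiff A G).symm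

section
variable [∀ i, Fintype (Xa i)]

lemma margRZ_jump4 (A G : Finset (Fin n)) (x y u : ∀ i, Xa i) :
    margRZ A (jump G x y) u =
      ∑ c : Fin 4, sgn4 c * (indC (CXf G A u c) x * indC (CYf G A u c) y) := by
  rw [margRZ_jump, Fin.sum_univ_four]
  simp only [sgn4, CXf, CYf]
  simp only [Matrix.cons_val_zero, Matrix.cons_val_one, Matrix.head_cons,
    Matrix.cons_val_two, Matrix.tail_cons, Matrix.cons_val_three, indC_empty]
  ring

lemma SXY_factor (G : Finset (Fin n)) {m : ℕ} (A : Fin m → Finset (Fin n))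
    (ξ : Fin m → ∀ i, Xa i) (T : Finset (Fin m)) (w : (∀ i, Xa i) → ℤ) :
    (∑ x : ∀ i, Xa i, ∑ y : ∀ i, Xa i, (w x : ℝ) * (w y : ℝ) *
        ∏ ℓ ∈ T, margRZ (A ℓ) (jump G x y) (ξ ℓ)) =
      ∑ p : {ℓ // ℓ ∈ T} → Fin 4,
        (∏ ℓ, sgn4 (p ℓ)) *
          (msum (Finset.univ.sup fun ℓ : {ℓ // ℓ ∈ T} => CXf G (A ℓ.1) (ξ ℓ.1) (p ℓ)) w *
           msum (Finset.univ.sup fun ℓ : {ℓ // ℓ ∈ T} => CYf G (A ℓ.1) (ξ ℓ.1) (p ℓ)) w) := by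
  have hexp : ∀ x y : ∀ i, Xa i,
      (∏ ℓ ∈ T, margRZ (A ℓ) (jump G x y) (ξ ℓ)) =
        ∑ p : {ℓ // ℓ ∈ T} → Fin 4,
          (∏ ℓ, sgn4 (p ℓ)) *
            (indC (Finset.univ.sup fun ℓ : {ℓ // ℓ ∈ T} => CXf G (A ℓ.1) (ξ ℓ.1) (p ℓ)) x *
             indC (Finset.univ.sup fun ℓ : {ℓ // ℓ ∈ T} => CYf G (A ℓ.1) (ξ ℓ.1) (p ℓ)) y) := by
    intro x y
    rw [← Finset.prod_attach T (fun ℓ => margRZ (A ℓ) (jump G x y) (ξ ℓ))]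
    rw [← Finset.univ_eq_attach]
    have : ∀ ℓ : {ℓ // ℓ ∈ T}, margRZ (A ℓ.1) (jump G x y) (ξ ℓ.1) =
        ∑ c ∈ (Finset.univ : Finset (Fin 4)),
          sgn4 c * (indC (CXf G (A ℓ.1) (ξ ℓ.1) c) x * indC (CYf G (A ℓ.1) (ξ ℓ.1) c) y) :=
      fun ℓ => margRZ_jump4 _ _ _ _ _
    rw [Finset.prod_congr rfl fun ℓ _ => this ℓ, Finset.prod_univ_sum]
    rw [Fintype.piFinset_univ]
    refine Finset.sum_congr rfl fun p _ => ?_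
    rw [Finset.prod_mul_distrib, Finset.prod_mul_distrib, prod_indC, prod_indC]
  calc
    (∑ x : ∀ i, Xa i, ∑ y : ∀ i, Xa i, (w x : ℝ) * (w y : ℝ) *
        ∏ ℓ ∈ T, margRZ (A ℓ) (jump G x y) (ξ ℓ))
      = ∑ x : ∀ i, Xa i, ∑ y : ∀ i, Xa i, ∑ p : {ℓ // ℓ ∈ T} → Fin 4,
          (∏ ℓ, sgn4 (p ℓ)) *
            (((w x : ℝ) * indC (Finset.univ.sup fun ℓ : {ℓ // ℓ ∈ T} =>
                CXf G (A ℓ.1) (ξ ℓ.1) (p ℓ)) x) *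
             ((w y : ℝ) * indC (Finset.univ.sup fun ℓ : {ℓ // ℓ ∈ T} =>
                CYf G (A ℓ.1) (ξ ℓ.1) (p ℓ)) y)) := by
        refine Finset.sum_congr rfl fun x _ => Finset.sum_congr rfl fun y _ => ?_
        rw [hexp x y, Finset.mul_sum]
        exact Finset.sum_congr rfl fun p _ => by ring
    _ = ∑ p : {ℓ // ℓ ∈ T} → Fin 4, ∑ x : ∀ i, Xa i, ∑ y : ∀ i, Xa i,
          (∏ ℓ, sgn4 (p ℓ)) *
            (((w x : ℝ) * indC (Finset.univ.sup fun ℓ : {ℓ // ℓ ∈ T} =>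
                CXf G (A ℓ.1) (ξ ℓ.1) (p ℓ)) x) *
             ((w y : ℝ) * indC (Finset.univ.sup fun ℓ : {ℓ // ℓ ∈ T} =>
                CYf G (A ℓ.1) (ξ ℓ.1) (p ℓ)) y)) := by
        exact (Finset.sum_congr rfl fun x _ => Finset.sum_comm).trans Finset.sum_comm
    _ = _ := by
        refine Finset.sum_congr rfl fun p _ => ?_
        unfold msum
        rw [Finset.sum_mul_sum, Finset.mul_sum]
        refine Finset.sum_congr rfl fun x _ => ?_
        rw [Finset.mul_sum]

end

/-! ### Two-term decomposition of mutation jumps -/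

def co2 (u : ∀ i, Xa i) (i : Fin n) (b : Xa i) : Fin 2 → ℝ :=
  ![if b = u i then 1 else 0, -1]

def CMf (A : Finset (Fin n)) (u : ∀ i, Xa i) (i : Fin n) :
    Fin 2 → Finset ((i : Fin n) × Xa i) :=
  ![toCS (A.erase i) u, toCS A u]

lemma sites_CMf_subset (A : Finset (Fin n)) (u : ∀ i, Xa i) (i : Fin n) (c : Fin 2) :
    sites (CMf A u i c) ⊆ A := by
  fin_cases c <;> simp [CMf, sites_toCS, Finset.erase_subset]

section
variable [∀ i, Fintype (Xa i)]

lemma dv_two (A : Finset (Fin n)) (u x : ∀ i, Xa i) (i : Fin n) (b : Xa i)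
    (hiA : i ∈ A) :
    indC (toCS A u) (Function.update x i b) - indC (toCS A u) x =
      ∑ c : Fin 2, co2 u i b c * indC (CMf A u i c) x := by
  rw [Fin.sum_univ_two, indC_update, if_pos hiA]
  simp only [co2, CMf, Matrix.cons_val_zero, Matrix.cons_val_one, Matrix.head_cons]
  ring

lemma dv_zero (A : Finset (Fin n)) (u x : ∀ i, Xa i) (i : Fin n) (b : Xa i)
    (hiA : i ∉ A) :
    indC (toCS A u) (Function.update x i b) = indC (toCS A u) x := by
  rw [indC_update, if_neg hiA, Finset.erase_eq_of_notMem hiA, one_mul]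

lemma MX_factor {m : ℕ} (A : Fin m → Finset (Fin n)) (ξ : Fin m → ∀ i, Xa i)
    (T : Finset (Fin m)) (i : Fin n) (b : Xa i) (μv : Xa i → ℝ)
    (hT : ∀ ℓ ∈ T, i ∈ A ℓ) (w : (∀ i, Xa i) → ℤ) :
    (∑ x : ∀ i, Xa i, (w x : ℝ) * μv (x i) *
        ∏ ℓ ∈ T, (indC (toCS (A ℓ) (ξ ℓ)) (Function.update x i b)
          - indC (toCS (A ℓ) (ξ ℓ)) x)) =
      ∑ p : {ℓ // ℓ ∈ T} → Fin 2, ∑ a : Xa i,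
        (∏ ℓ, co2 (ξ ℓ.1) i b (p ℓ)) * (μv a *
          msum (insert ⟨i, a⟩
            (Finset.univ.sup fun ℓ : {ℓ // ℓ ∈ T} => CMf (A ℓ.1) (ξ ℓ.1) i (p ℓ))) w) := by
  have hexp : ∀ x : ∀ i, Xa i,
      (∏ ℓ ∈ T, (indC (toCS (A ℓ) (ξ ℓ)) (Function.update x i b)
          - indC (toCS (A ℓ) (ξ ℓ)) x)) =
        ∑ p : {ℓ // ℓ ∈ T} → Fin 2,
          (∏ ℓ, co2 (ξ ℓ.1) i b (p ℓ)) *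
            indC (Finset.univ.sup fun ℓ : {ℓ // ℓ ∈ T} => CMf (A ℓ.1) (ξ ℓ.1) i (p ℓ)) x := by
    intro x
    rw [← Finset.prod_attach T, ← Finset.univ_eq_attach]
    have : ∀ ℓ : {ℓ // ℓ ∈ T},
        (indC (toCS (A ℓ.1) (ξ ℓ.1)) (Function.update x i b)
          - indC (toCS (A ℓ.1) (ξ ℓ.1)) x) =
        ∑ c ∈ (Finset.univ : Finset (Fin 2)),
          co2 (ξ ℓ.1) i b c * indC (CMf (A ℓ.1) (ξ ℓ.1) i c) x :=
      fun ℓ => dv_two _ _ _ _ _ (hT ℓ.1 ℓ.2)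
    rw [Finset.prod_congr rfl fun ℓ _ => this ℓ, Finset.prod_univ_sum,
      Fintype.piFinset_univ]
    refine Finset.sum_congr rfl fun p _ => ?_
    rw [Finset.prod_mul_distrib, prod_indC]
  calc
    (∑ x : ∀ i, Xa i, (w x : ℝ) * μv (x i) *
        ∏ ℓ ∈ T, (indC (toCS (A ℓ) (ξ ℓ)) (Function.update x i b)
          - indC (toCS (A ℓ) (ξ ℓ)) x))
      = ∑ x : ∀ i, Xa i, ∑ p : {ℓ // ℓ ∈ T} → Fin 2,
          (∏ ℓ, co2 (ξ ℓ.1) i b (p ℓ)) * ((w x : ℝ) * μv (x i) *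
            indC (Finset.univ.sup fun ℓ : {ℓ // ℓ ∈ T} => CMf (A ℓ.1) (ξ ℓ.1) i (p ℓ)) x) := by
        refine Finset.sum_congr rfl fun x _ => ?_
        rw [hexp x, Finset.mul_sum]
        exact Finset.sum_congr rfl fun p _ => by ring
    _ = ∑ p : {ℓ // ℓ ∈ T} → Fin 2, ∑ x : ∀ i, Xa i,
          (∏ ℓ, co2 (ξ ℓ.1) i b (p ℓ)) * ((w x : ℝ) * μv (x i) *
            indC (Finset.univ.sup fun ℓ : {ℓ // ℓ ∈ T} => CMf (A ℓ.1) (ξ ℓ.1) i (p ℓ)) x) :=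
        Finset.sum_comm
    _ = _ := by
        refine Finset.sum_congr rfl fun p _ => ?_
        set SM := Finset.univ.sup fun ℓ : {ℓ // ℓ ∈ T} => CMf (A ℓ.1) (ξ ℓ.1) i (p ℓ)
          with hSM
        have hins : ∀ (a : Xa i) (x : ∀ i, Xa i),
            indC (insert (⟨i, a⟩ : (i : Fin n) × Xa i) SM) x =
              (if x i = a then 1 else 0) * indC SM x := fun a x => indC_insert _ _ _
        unfold msum
        calc
          ∑ x : ∀ i, Xa i, (∏ ℓ, co2 (ξ ℓ.1) i b (p ℓ)) * ((w x : ℝ) * μv (x i) *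
              indC SM x)
            = ∑ x : ∀ i, Xa i, ∑ a : Xa i, (∏ ℓ, co2 (ξ ℓ.1) i b (p ℓ)) *
                (μv a * ((w x : ℝ) * ((if x i = a then 1 else 0) * indC SM x))) := by
              refine Finset.sum_congr rfl fun x _ => ?_
              rw [Finset.sum_eq_single (x i)]
              · rw [if_pos rfl]; ring
              · intro a _ ha
                rw [if_neg fun h => ha h.symm]; ring
              · intro h
                exact absurd (Finset.mem_univ _) h
          _ = ∑ a : Xa i, ∑ x : ∀ i, Xa i, (∏ ℓ, co2 (ξ ℓ.1) i b (p ℓ)) *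
                (μv a * ((w x : ℝ) * ((if x i = a then 1 else 0) * indC SM x))) :=
              Finset.sum_comm
          _ = ∑ a : Xa i, (∏ ℓ, co2 (ξ ℓ.1) i b (p ℓ)) *
                (μv a * ∑ x : ∀ i, Xa i, (w x : ℝ) *
                  indC (insert (⟨i, a⟩ : (i : Fin n) × Xa i) SM) x) := by
              refine Finset.sum_congr rfl fun a _ => ?_
              rw [Finset.mul_sum, Finset.mul_sum]
              refine Finset.sum_congr rfl fun x _ => ?_
              rw [hins a x]
end

/-! ### State-space membership of jump targets -/

lemma delta_self {α : Type*} (a : α) : delta a a = 1 := if_pos rfl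

lemma delta_ne {α : Type*} {a w : α} (h : w ≠ a) : delta a w = 0 := if_neg h

lemma recMap_self (G : Finset (Fin n)) (x : ∀ i, Xa i) : recMap G x x = x := by
  funext i
  unfold recMap
  split <;> rfl

lemma jump_self (G : Finset (Fin n)) (x : ∀ i, Xa i) : jump G x x = 0 := by
  funext w
  simp [jump, recMap_self]

section
variable [∀ i, Fintype (Xa i)] {N : ℕ}

lemma sum_delta (a : ∀ i, Xa i) : ∑ w : ∀ i, Xa i, delta a w = 1 := by
  rw [Finset.sum_eq_single a]
  · exact delta_self a
  · exact fun w _ hw => delta_ne hw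
  · exact fun h => absurd (Finset.mem_univ _) h

lemma memE_jump (z : stateSpace (Xa := Xa) N) (G : Finset (Fin n))
    (x y : ∀ i, Xa i) (hx : z.val x ≠ 0) (hy : z.val y ≠ 0) :
    (∀ w, 0 ≤ (z.val + jump G x y) w) ∧
      ∑ w : ∀ i, Xa i, (z.val + jump G x y) w = N := by
  constructor
  · intro w
    by_cases hxy : x = y
    · subst hxy
      rw [jump_self]
      simpa using z.2.1 w
    · have h0w := z.2.1 w
      have h0x := z.2.1 x
      have h0y := z.2.1 y
      have b1 : 0 ≤ delta (recMap G x y) w := by unfold delta; split <;> omega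
      have b2 : 0 ≤ delta (recMap Gᶜ x y) w := by unfold delta; split <;> omega
      show 0 ≤ z.val w + (delta (recMap G x y) w + delta (recMap Gᶜ x y) w
        - delta x w - delta y w)
      by_cases hwx : w = x
      · subst hwx
        rw [delta_self, delta_ne hxy]
        omega
      · rw [delta_ne hwx]
        by_cases hwy : w = y
        · subst hwy
          rw [delta_self]
          omega
        · rw [delta_ne hwy]
          omega
  · show ∑ w : ∀ i, Xa i, (z.val w + (delta (recMap G x y) w
      + delta (recMap Gᶜ x y) w - delta x w - delta y w)) = N
    rw [Finset.sum_add_distrib, z.2.2]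
    have : ∑ w : ∀ i, Xa i, (delta (recMap G x y) w + delta (recMap Gᶜ x y) w
        - delta x w - delta y w) = 0 := by
      simp only [Finset.sum_sub_distrib, Finset.sum_add_distrib, sum_delta]
      ring
    rw [this, add_zero]

lemma memE_mut (z : stateSpace (Xa := Xa) N) (x : ∀ i, Xa i) (i : Fin n) (b : Xa i)
    (hx : z.val x ≠ 0) :
    (∀ w, 0 ≤ (z.val - delta x + delta (Function.update x i b)) w) ∧
      ∑ w : ∀ i, Xa i, (z.val - delta x + delta (Function.update x i b)) w = N := by
  constructor
  · intro w
    have h0w := z.2.1 w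
    have h0x := z.2.1 x
    have b1 : 0 ≤ delta (Function.update x i b) w := by unfold delta; split <;> omega
    show 0 ≤ z.val w - delta x w + delta (Function.update x i b) w
    by_cases hwx : w = x
    · subst hwx
      rw [delta_self]
      omega
    · rw [delta_ne hwx]
      omega
  · show ∑ w : ∀ i, Xa i, (z.val w - delta x w + delta (Function.update x i b) w) = N
    rw [Finset.sum_add_distrib, Finset.sum_sub_distrib, z.2.2, sum_delta, sum_delta]
    ring

lemma sum_cast_N (z : stateSpace (Xa := Xa) N) :
    ∑ x : ∀ i, Xa i, (z.val x : ℝ) = (N : ℝ) := by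
  rw [← Int.cast_sum, z.2.2, Int.cast_natCast]

end

/-! ### Pointwise formulas for the generators on product functions -/

section
variable [∀ i, Fintype (Xa i)] {N : ℕ}

lemma sum_sum_congr {α β : Type*} [Fintype α] [Fintype β] {f g : α → β → ℝ}
    (h : ∀ x y, f x y = g x y) :
    ∑ x : α, ∑ y : β, f x y = ∑ x : α, ∑ y : β, g x y :=
  Finset.sum_congr rfl fun x _ => Finset.sum_congr rfl fun y _ => h x y

lemma recGen_formula (ρ : Finset (Fin n) → ℝ) {m : ℕ} (A : Fin m → Finset (Fin n))
    (ξ : Fin m → ∀ i, Xa i) (z : stateSpace (Xa := Xa) N) :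
    recGenE ρ N (fun z => ∏ ℓ : Fin m, margRZ (A ℓ) z.val (ξ ℓ)) z =
      (∑ G : Finset (Fin n), ∑ T ∈ (Finset.univ : Finset (Fin m)).powerset,
        ρ G / (4 * N) *
          ((∑ x : ∀ i, Xa i, ∑ y : ∀ i, Xa i, (z.val x : ℝ) * (z.val y : ℝ) *
              ∏ ℓ ∈ T, margRZ (A ℓ) (jump G x y) (ξ ℓ)) *
            ∏ ℓ ∈ Finset.univ \ T, margRZ (A ℓ) z.val (ξ ℓ)))
      - (∑ G : Finset (Fin n), ρ G / (4 * N)) *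
          ((N : ℝ) ^ 2 * ∏ ℓ : Fin m, margRZ (A ℓ) z.val (ξ ℓ)) := by
  have step1 : recGenE ρ N (fun z => ∏ ℓ : Fin m, margRZ (A ℓ) z.val (ξ ℓ)) z =
      ∑ G : Finset (Fin n), ∑ x : ∀ i, Xa i, ∑ y : ∀ i, Xa i,
        ρ G / (4 * N) * (z.val x : ℝ) * (z.val y : ℝ) *
          ((∑ T ∈ (Finset.univ : Finset (Fin m)).powerset,
              (∏ ℓ ∈ T, margRZ (A ℓ) (jump G x y) (ξ ℓ)) *
                ∏ ℓ ∈ Finset.univ \ T, margRZ (A ℓ) z.val (ξ ℓ))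
            - ∏ ℓ : Fin m, margRZ (A ℓ) z.val (ξ ℓ)) := by
    unfold recGenE
    refine Finset.sum_congr rfl fun G _ => sum_sum_congr fun x y => ?_
    by_cases hx : z.val x = 0
    · rw [hx]
      norm_num
    by_cases hy : z.val y = 0
    · rw [hy]
      norm_num
    rw [dif_pos (memE_jump z G x y hx hy)]
    congr 1
    have h1 : (fun z : stateSpace (Xa := Xa) N =>
        ∏ ℓ : Fin m, margRZ (A ℓ) z.val (ξ ℓ)) ⟨z.val + jump G x y,
          memE_jump z G x y hx hy⟩ =
        ∏ ℓ : Fin m, margRZ (A ℓ) (z.val + jump G x y) (ξ ℓ) := rfl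
    rw [h1]
    congr 1
    have h2 : ∀ ℓ : Fin m, margRZ (A ℓ) (z.val + jump G x y) (ξ ℓ) =
        margRZ (A ℓ) (jump G x y) (ξ ℓ) + margRZ (A ℓ) z.val (ξ ℓ) := by
      intro ℓ
      rw [margRZ_add]
      ring
    rw [Finset.prod_congr rfl fun ℓ _ => h2 ℓ, Finset.prod_add]
  rw [step1]
  have step2 : ∀ G : Finset (Fin n), ∑ x : ∀ i, Xa i, ∑ y : ∀ i, Xa i,
      ρ G / (4 * N) * (z.val x : ℝ) * (z.val y : ℝ) *
        ((∑ T ∈ (Finset.univ : Finset (Fin m)).powerset,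
            (∏ ℓ ∈ T, margRZ (A ℓ) (jump G x y) (ξ ℓ)) *
              ∏ ℓ ∈ Finset.univ \ T, margRZ (A ℓ) z.val (ξ ℓ))
          - ∏ ℓ : Fin m, margRZ (A ℓ) z.val (ξ ℓ)) =
      (∑ T ∈ (Finset.univ : Finset (Fin m)).powerset,
        ρ G / (4 * N) *
          ((∑ x : ∀ i, Xa i, ∑ y : ∀ i, Xa i, (z.val x : ℝ) * (z.val y : ℝ) *
              ∏ ℓ ∈ T, margRZ (A ℓ) (jump G x y) (ξ ℓ)) *
            ∏ ℓ ∈ Finset.univ \ T, margRZ (A ℓ) z.val (ξ ℓ)))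
      - ρ G / (4 * N) *
          ((N : ℝ) ^ 2 * ∏ ℓ : Fin m, margRZ (A ℓ) z.val (ξ ℓ)) := by
    intro G
    have e1 : ∑ x : ∀ i, Xa i, ∑ y : ∀ i, Xa i,
        ρ G / (4 * N) * (z.val x : ℝ) * (z.val y : ℝ) *
          ((∑ T ∈ (Finset.univ : Finset (Fin m)).powerset,
              (∏ ℓ ∈ T, margRZ (A ℓ) (jump G x y) (ξ ℓ)) *
                ∏ ℓ ∈ Finset.univ \ T, margRZ (A ℓ) z.val (ξ ℓ))
            - ∏ ℓ : Fin m, margRZ (A ℓ) z.val (ξ ℓ)) =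
        ∑ x : ∀ i, Xa i, ∑ y : ∀ i, Xa i,
          ((∑ T ∈ (Finset.univ : Finset (Fin m)).powerset,
            ρ G / (4 * N) *
              (((z.val x : ℝ) * (z.val y : ℝ) *
                ∏ ℓ ∈ T, margRZ (A ℓ) (jump G x y) (ξ ℓ)) *
                ∏ ℓ ∈ Finset.univ \ T, margRZ (A ℓ) z.val (ξ ℓ)))
          - ρ G / (4 * N) * (z.val x : ℝ) * (z.val y : ℝ) *
              ∏ ℓ : Fin m, margRZ (A ℓ) z.val (ξ ℓ)) := by
      refine sum_sum_congr fun x y => ?_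
      rw [mul_sub, Finset.mul_sum]
      congr 1
      exact Finset.sum_congr rfl fun T _ => by ring
    rw [e1]
    rw [show ∀ f g : (∀ i, Xa i) → (∀ i, Xa i) → ℝ,
      (∑ x : ∀ i, Xa i, ∑ y : ∀ i, Xa i, (f x y - g x y)) =
        (∑ x : ∀ i, Xa i, ∑ y : ∀ i, Xa i, f x y)
          - ∑ x : ∀ i, Xa i, ∑ y : ∀ i, Xa i, g x y from fun f g =>
        (Finset.sum_congr rfl fun x _ => Finset.sum_sub_distrib _ _).trans
          (Finset.sum_sub_distrib _ _)]
    congr 1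
    · rw [(Finset.sum_congr rfl fun x (_ : x ∈ Finset.univ) =>
        Finset.sum_comm).trans Finset.sum_comm]
      refine Finset.sum_congr rfl fun T _ => ?_
      simp only [Finset.mul_sum, Finset.sum_mul]
      all_goals exact sum_sum_congr fun x y => by ring
    · have e3 : ∑ x : ∀ i, Xa i, ∑ y : ∀ i, Xa i,
          ρ G / (4 * N) * (z.val x : ℝ) * (z.val y : ℝ) *
            ∏ ℓ : Fin m, margRZ (A ℓ) z.val (ξ ℓ) =
          (∑ x : ∀ i, Xa i, (z.val x : ℝ)) * ((∑ y : ∀ i, Xa i, (z.val y : ℝ)) *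
            (ρ G / (4 * N) * ∏ ℓ : Fin m, margRZ (A ℓ) z.val (ξ ℓ))) := by
        simp only [Finset.mul_sum, Finset.sum_mul]
        exact sum_sum_congr fun x y => by ring
      rw [e3, sum_cast_N]
      ring
  rw [Finset.sum_congr rfl fun G (_ : G ∈ Finset.univ) => step2 G,
    Finset.sum_sub_distrib, ← Finset.sum_mul]

lemma mutGen_formula (μ : ∀ i, Xa i → Xa i → ℝ) {m : ℕ} (A : Fin m → Finset (Fin n))
    (ξ : Fin m → ∀ i, Xa i) (z : stateSpace (Xa := Xa) N) :
    mutGenE μ N (fun z => ∏ ℓ : Fin m, margRZ (A ℓ) z.val (ξ ℓ)) z =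
      ∑ i : Fin n, ∑ T ∈ ((Finset.univ : Finset (Fin m)).powerset).erase ∅,
        (∑ b : Xa i, ∑ x : ∀ i, Xa i, (z.val x : ℝ) * μ i (x i) b *
            ∏ ℓ ∈ T, (indC (toCS (A ℓ) (ξ ℓ)) (Function.update x i b)
              - indC (toCS (A ℓ) (ξ ℓ)) x)) *
          ∏ ℓ ∈ Finset.univ \ T, margRZ (A ℓ) z.val (ξ ℓ) := by
  have step1 : mutGenE μ N (fun z => ∏ ℓ : Fin m, margRZ (A ℓ) z.val (ξ ℓ)) z =
      ∑ i : Fin n, ∑ x : ∀ j, Xa j, ∑ b : Xa i,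
        ∑ T ∈ ((Finset.univ : Finset (Fin m)).powerset).erase ∅,
          (z.val x : ℝ) * μ i (x i) b *
            ((∏ ℓ ∈ T, (indC (toCS (A ℓ) (ξ ℓ)) (Function.update x i b)
                - indC (toCS (A ℓ) (ξ ℓ)) x)) *
              ∏ ℓ ∈ Finset.univ \ T, margRZ (A ℓ) z.val (ξ ℓ)) := by
    unfold mutGenE
    refine Finset.sum_congr rfl fun i _ => sum_sum_congr fun x b => ?_
    by_cases hx : z.val x = 0
    · rw [hx]
      norm_num
    rw [dif_pos (memE_mut z x i b hx)]
    have h1 : (fun z : stateSpace (Xa := Xa) N =>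
        ∏ ℓ : Fin m, margRZ (A ℓ) z.val (ξ ℓ)) ⟨z.val - delta x
          + delta (Function.update x i b), memE_mut z x i b hx⟩ =
        ∏ ℓ : Fin m, margRZ (A ℓ) (z.val - delta x
          + delta (Function.update x i b)) (ξ ℓ) := rfl
    rw [h1]
    have h2 : ∀ ℓ : Fin m, margRZ (A ℓ) (z.val - delta x
        + delta (Function.update x i b)) (ξ ℓ) =
        (indC (toCS (A ℓ) (ξ ℓ)) (Function.update x i b)
          - indC (toCS (A ℓ) (ξ ℓ)) x) + margRZ (A ℓ) z.val (ξ ℓ) := by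
      intro ℓ
      rw [margRZ_add, margRZ_sub, margRZ_delta, margRZ_delta]
      ring
    rw [Finset.prod_congr rfl fun ℓ _ => h2 ℓ, Finset.prod_add]
    rw [← Finset.add_sum_erase _ _ (Finset.empty_mem_powerset (Finset.univ : Finset (Fin m)))]
    rw [Finset.prod_empty, one_mul, Finset.sdiff_empty]
    rw [show ∀ P S : ℝ, μ i (x i) b * (z.val x : ℝ) * (P + S - P) =
      (z.val x : ℝ) * μ i (x i) b * S from fun P S => by ring]
    rw [Finset.mul_sum]
    all_goals exact Finset.sum_congr rfl fun T _ => by ring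
  rw [step1]
  refine Finset.sum_congr rfl fun i _ => ?_
  calc
    (∑ x : ∀ j, Xa j, ∑ b : Xa i,
        ∑ T ∈ ((Finset.univ : Finset (Fin m)).powerset).erase ∅,
          (z.val x : ℝ) * μ i (x i) b *
            ((∏ ℓ ∈ T, (indC (toCS (A ℓ) (ξ ℓ)) (Function.update x i b)
                - indC (toCS (A ℓ) (ξ ℓ)) x)) *
              ∏ ℓ ∈ Finset.univ \ T, margRZ (A ℓ) z.val (ξ ℓ)))
      = ∑ T ∈ ((Finset.univ : Finset (Fin m)).powerset).erase ∅,
          ∑ b : Xa i, ∑ x : ∀ j, Xa j,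
          (z.val x : ℝ) * μ i (x i) b *
            ((∏ ℓ ∈ T, (indC (toCS (A ℓ) (ξ ℓ)) (Function.update x i b)
                - indC (toCS (A ℓ) (ξ ℓ)) x)) *
              ∏ ℓ ∈ Finset.univ \ T, margRZ (A ℓ) z.val (ξ ℓ)) := by
        rw [Finset.sum_congr rfl fun x (_ : x ∈ Finset.univ) => Finset.sum_comm]
        rw [Finset.sum_comm]
        exact Finset.sum_congr rfl fun T _ => Finset.sum_comm
    _ = _ := by
        refine Finset.sum_congr rfl fun T _ => ?_
        simp only [Finset.mul_sum, Finset.sum_mul]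
        all_goals exact Finset.sum_congr rfl fun b _ =>
          Finset.sum_congr rfl fun x _ => by ring

/-! ### Membership of product families with extra constraint blocks -/

lemma prod_two_extra_mem (cs0 cs1 : Finset ((i : Fin n) × Xa i)) {m : ℕ}
    (A : Fin m → Finset (Fin n)) (ξ : Fin m → ∀ i, Xa i) (T : Finset (Fin m))
    [∀ i, Nonempty (Xa i)]
    (hdA : ∀ k l, k ≠ l → Disjoint (A k) (A l))
    (h01 : Disjoint (sites cs0) (sites cs1))
    (h0 : ∀ ℓ ∈ Finset.univ \ T, Disjoint (sites cs0) (A ℓ))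
    (h1 : ∀ ℓ ∈ Finset.univ \ T, Disjoint (sites cs1) (A ℓ)) :
    (fun z : stateSpace (Xa := Xa) N => msum cs0 z.val *
        (msum cs1 z.val * ∏ ℓ ∈ Finset.univ \ T, margRZ (A ℓ) z.val (ξ ℓ))) ∈
      Submodule.span ℝ (genSet (Xa := Xa) N) := by
  set csf : Option (Option (Fin m)) → Finset ((i : Fin n) × Xa i) :=
    fun k => match k with
      | none => cs0
      | some none => cs1
      | some (some ℓ) => toCS (A ℓ) (ξ ℓ) with hcsf
  set s : Finset (Option (Option (Fin m))) :=
    insert none (insert (some none)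
      ((Finset.univ \ T).image fun ℓ => some (some ℓ))) with hs
  have h1n : (none : Option (Option (Fin m))) ∉
      insert (some none) ((Finset.univ \ T).image fun ℓ => some (some ℓ)) := by
    simp
  have h2n : (some none : Option (Option (Fin m))) ∉
      (Finset.univ \ T).image fun ℓ => some (some ℓ) := by
    simp
  have heq : (fun z : stateSpace (Xa := Xa) N => msum cs0 z.val *
      (msum cs1 z.val * ∏ ℓ ∈ Finset.univ \ T, margRZ (A ℓ) z.val (ξ ℓ))) =
      fun z : stateSpace (Xa := Xa) N => ∏ k ∈ s, msum (csf k) z.val := by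
    funext z
    rw [hs, Finset.prod_insert h1n, Finset.prod_insert h2n,
      Finset.prod_image (fun ℓ _ ℓ' _ h => by simpa using h)]
    congr 1
    congr 1
    exact Finset.prod_congr rfl fun ℓ _ => (msum_toCS _ _ _).symm
  rw [heq]
  refine prodMsum_mem s csf ?_
  intro k hk l hl hkl
  have hmem : ∀ j : Option (Option (Fin m)), j ∈ s →
      j = none ∨ j = some none ∨ ∃ ℓ ∈ Finset.univ \ T, j = some (some ℓ) := by
    intro j hj
    rw [hs] at hj
    rcases Finset.mem_insert.1 hj with h | hj
    · exact Or.inl h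
    rcases Finset.mem_insert.1 hj with h | hj
    · exact Or.inr (Or.inl h)
    obtain ⟨ℓ, hℓ, rfl⟩ := Finset.mem_image.1 hj
    exact Or.inr (Or.inr ⟨ℓ, hℓ, rfl⟩)
  have hsite : ∀ (j) (hj : j ∈ s), ∀ (j') (hj' : j' ∈ s), j ≠ j' →
      Disjoint (sites (csf j)) (sites (csf j')) := by
    intro j hj j' hj' hne
    rcases hmem j hj with rfl | rfl | ⟨ℓ, hℓ, rfl⟩ <;>
      rcases hmem j' hj' with rfl | rfl | ⟨ℓ', hℓ', rfl⟩
    · exact absurd rfl hne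
    · exact h01
    · simpa [hcsf, sites_toCS] using h0 ℓ' hℓ'
    · exact h01.symm
    · exact absurd rfl hne
    · simpa [hcsf, sites_toCS] using h1 ℓ' hℓ'
    · simpa [hcsf, sites_toCS] using (h0 ℓ hℓ).symm
    · simpa [hcsf, sites_toCS] using (h1 ℓ hℓ).symm
    · have hℓℓ' : ℓ ≠ ℓ' := fun h => hne (by rw [h])
      simpa [hcsf, sites_toCS] using hdA ℓ ℓ' hℓℓ'
  exact hsite k hk l hl hkl

lemma prod_one_extra_mem (cs0 : Finset ((i : Fin n) × Xa i)) {m : ℕ}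
    (A : Fin m → Finset (Fin n)) (ξ : Fin m → ∀ i, Xa i) (T : Finset (Fin m))
    [∀ i, Nonempty (Xa i)]
    (hdA : ∀ k l, k ≠ l → Disjoint (A k) (A l))
    (h0 : ∀ ℓ ∈ Finset.univ \ T, Disjoint (sites cs0) (A ℓ)) :
    (fun z : stateSpace (Xa := Xa) N => msum cs0 z.val *
        ∏ ℓ ∈ Finset.univ \ T, margRZ (A ℓ) z.val (ξ ℓ)) ∈
      Submodule.span ℝ (genSet (Xa := Xa) N) := by
  set csf : Option (Fin m) → Finset ((i : Fin n) × Xa i) :=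
    fun k => match k with
      | none => cs0
      | some ℓ => toCS (A ℓ) (ξ ℓ) with hcsf
  set s : Finset (Option (Fin m)) :=
    insert none ((Finset.univ \ T).image fun ℓ => some ℓ) with hs
  have h1n : (none : Option (Fin m)) ∉
      (Finset.univ \ T).image (fun ℓ => some ℓ) := by simp
  have heq : (fun z : stateSpace (Xa := Xa) N => msum cs0 z.val *
      ∏ ℓ ∈ Finset.univ \ T, margRZ (A ℓ) z.val (ξ ℓ)) =
      fun z : stateSpace (Xa := Xa) N => ∏ k ∈ s, msum (csf k) z.val := by
    funext z
    rw [hs, Finset.prod_insert h1n,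
      Finset.prod_image (fun ℓ _ ℓ' _ h => by simpa using h)]
    congr 1
    exact Finset.prod_congr rfl fun ℓ _ => (msum_toCS _ _ _).symm
  rw [heq]
  refine prodMsum_mem s csf ?_
  have hmem : ∀ j : Option (Fin m), j ∈ s →
      j = none ∨ ∃ ℓ ∈ Finset.univ \ T, j = some ℓ := by
    intro j hj
    rw [hs] at hj
    rcases Finset.mem_insert.1 hj with h | hj
    · exact Or.inl h
    obtain ⟨ℓ, hℓ, rfl⟩ := Finset.mem_image.1 hj
    exact Or.inr ⟨ℓ, hℓ, rfl⟩
  intro k hk l hl hkl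
  rcases hmem k hk with rfl | ⟨ℓ, hℓ, rfl⟩ <;>
    rcases hmem l hl with rfl | ⟨ℓ', hℓ', rfl⟩
  · exact absurd rfl hkl
  · simpa [hcsf, sites_toCS] using h0 ℓ' hℓ'
  · simpa [hcsf, sites_toCS] using (h0 ℓ hℓ).symm
  · have hℓℓ' : ℓ ≠ ℓ' := fun h => hkl (by rw [h])
    simpa [hcsf, sites_toCS] using hdA ℓ ℓ' hℓℓ'

lemma rec_term_mem (G : Finset (Fin n)) {m : ℕ} (A : Fin m → Finset (Fin n))
    (ξ : Fin m → ∀ i, Xa i) (T : Finset (Fin m)) [∀ i, Nonempty (Xa i)]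
    (hdA : ∀ k l, k ≠ l → Disjoint (A k) (A l)) :
    (fun z : stateSpace (Xa := Xa) N =>
      (∑ x : ∀ i, Xa i, ∑ y : ∀ i, Xa i, (z.val x : ℝ) * (z.val y : ℝ) *
          ∏ ℓ ∈ T, margRZ (A ℓ) (jump G x y) (ξ ℓ)) *
        ∏ ℓ ∈ Finset.univ \ T, margRZ (A ℓ) z.val (ξ ℓ)) ∈
      Submodule.span ℝ (genSet (Xa := Xa) N) := by
  have hX : ∀ (p : {ℓ // ℓ ∈ T} → Fin 4) (j : Fin n),
      j ∈ sites (Finset.univ.sup fun ℓ : {ℓ // ℓ ∈ T} => CXf G (A ℓ.1) (ξ ℓ.1) (p ℓ)) →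
        ∃ ℓ : {ℓ // ℓ ∈ T}, j ∈ sites (CXf G (A ℓ.1) (ξ ℓ.1) (p ℓ)) := by
    intro p j hj
    rw [sites_sup] at hj
    obtain ⟨ℓ, _, hℓ⟩ := Finset.mem_sup.1 hj
    exact ⟨ℓ, hℓ⟩
  have hY : ∀ (p : {ℓ // ℓ ∈ T} → Fin 4) (j : Fin n),
      j ∈ sites (Finset.univ.sup fun ℓ : {ℓ // ℓ ∈ T} => CYf G (A ℓ.1) (ξ ℓ.1) (p ℓ)) →
        ∃ ℓ : {ℓ // ℓ ∈ T}, j ∈ sites (CYf G (A ℓ.1) (ξ ℓ.1) (p ℓ)) := by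
    intro p j hj
    rw [sites_sup] at hj
    obtain ⟨ℓ, _, hℓ⟩ := Finset.mem_sup.1 hj
    exact ⟨ℓ, hℓ⟩
  have heq : (fun z : stateSpace (Xa := Xa) N =>
      (∑ x : ∀ i, Xa i, ∑ y : ∀ i, Xa i, (z.val x : ℝ) * (z.val y : ℝ) *
          ∏ ℓ ∈ T, margRZ (A ℓ) (jump G x y) (ξ ℓ)) *
        ∏ ℓ ∈ Finset.univ \ T, margRZ (A ℓ) z.val (ξ ℓ)) =
      ∑ p : {ℓ // ℓ ∈ T} → Fin 4, (∏ ℓ, sgn4 (p ℓ)) •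
        fun z : stateSpace (Xa := Xa) N =>
          msum (Finset.univ.sup fun ℓ : {ℓ // ℓ ∈ T} => CXf G (A ℓ.1) (ξ ℓ.1) (p ℓ)) z.val *
            (msum (Finset.univ.sup fun ℓ : {ℓ // ℓ ∈ T} => CYf G (A ℓ.1) (ξ ℓ.1) (p ℓ)) z.val *
              ∏ ℓ ∈ Finset.univ \ T, margRZ (A ℓ) z.val (ξ ℓ)) := by
    funext z
    rw [Finset.sum_apply, SXY_factor G A ξ T z.val, Finset.sum_mul]
    exact Finset.sum_congr rfl fun p _ => by
      rw [Pi.smul_apply, smul_eq_mul]; ring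
  rw [heq]
  refine Submodule.sum_mem _ fun p _ => Submodule.smul_mem _ _ ?_
  refine prod_two_extra_mem _ _ A ξ T hdA ?_ ?_ ?_
  · rw [Finset.disjoint_left]
    intro j hjX hjY
    obtain ⟨ℓ, hℓ⟩ := hX p j hjX
    obtain ⟨ℓ', hℓ'⟩ := hY p j hjY
    by_cases hll : ℓ = ℓ'
    · subst hll
      exact (Finset.disjoint_left.1 (disj_CXY G (A ℓ.1) (ξ ℓ.1) (p ℓ))) hℓ hℓ'
    · exact (Finset.disjoint_left.1
        (hdA ℓ.1 ℓ'.1 fun h => hll (Subtype.ext h)))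
        (sites_CXf_subset _ _ _ _ hℓ) (sites_CYf_subset _ _ _ _ hℓ')
  · intro ℓ'' hℓ''
    rw [Finset.disjoint_left]
    intro j hjX hjA
    obtain ⟨ℓ, hℓ⟩ := hX p j hjX
    have hne : ℓ.1 ≠ ℓ'' := fun h => (Finset.mem_sdiff.1 hℓ'').2 (h ▸ ℓ.2)
    exact (Finset.disjoint_left.1 (hdA ℓ.1 ℓ'' hne))
      (sites_CXf_subset _ _ _ _ hℓ) hjA
  · intro ℓ'' hℓ''
    rw [Finset.disjoint_left]
    intro j hjY hjA
    obtain ⟨ℓ, hℓ⟩ := hY p j hjY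
    have hne : ℓ.1 ≠ ℓ'' := fun h => (Finset.mem_sdiff.1 hℓ'').2 (h ▸ ℓ.2)
    exact (Finset.disjoint_left.1 (hdA ℓ.1 ℓ'' hne))
      (sites_CYf_subset _ _ _ _ hℓ) hjA

lemma mut_term_mem (i : Fin n) (b : Xa i) (μv : Xa i → ℝ) {m : ℕ}
    (A : Fin m → Finset (Fin n)) (ξ : Fin m → ∀ i, Xa i) (T : Finset (Fin m))
    [∀ i, Nonempty (Xa i)] (hT : T.Nonempty)
    (hdA : ∀ k l, k ≠ l → Disjoint (A k) (A l)) :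
    (fun z : stateSpace (Xa := Xa) N =>
      (∑ x : ∀ i, Xa i, (z.val x : ℝ) * μv (x i) *
          ∏ ℓ ∈ T, (indC (toCS (A ℓ) (ξ ℓ)) (Function.update x i b)
            - indC (toCS (A ℓ) (ξ ℓ)) x)) *
        ∏ ℓ ∈ Finset.univ \ T, margRZ (A ℓ) z.val (ξ ℓ)) ∈
      Submodule.span ℝ (genSet (Xa := Xa) N) := by
  by_cases hall : ∀ ℓ ∈ T, i ∈ A ℓ
  · have heq : (fun z : stateSpace (Xa := Xa) N =>
        (∑ x : ∀ i, Xa i, (z.val x : ℝ) * μv (x i) *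
            ∏ ℓ ∈ T, (indC (toCS (A ℓ) (ξ ℓ)) (Function.update x i b)
              - indC (toCS (A ℓ) (ξ ℓ)) x)) *
          ∏ ℓ ∈ Finset.univ \ T, margRZ (A ℓ) z.val (ξ ℓ)) =
        ∑ p : {ℓ // ℓ ∈ T} → Fin 2, ∑ a : Xa i,
          ((∏ ℓ, co2 (ξ ℓ.1) i b (p ℓ)) * μv a) •
            fun z : stateSpace (Xa := Xa) N =>
              msum (insert (⟨i, a⟩ : (i : Fin n) × Xa i)
                (Finset.univ.sup fun ℓ : {ℓ // ℓ ∈ T} => CMf (A ℓ.1) (ξ ℓ.1) i (p ℓ))) z.val *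
                ∏ ℓ ∈ Finset.univ \ T, margRZ (A ℓ) z.val (ξ ℓ) := by
      funext z
      rw [Finset.sum_apply, MX_factor A ξ T i b μv hall z.val, Finset.sum_mul]
      refine Finset.sum_congr rfl fun p _ => ?_
      rw [Finset.sum_apply, Finset.sum_mul]
      exact Finset.sum_congr rfl fun a _ => by
        rw [Pi.smul_apply, smul_eq_mul]; ring
    rw [heq]
    refine Submodule.sum_mem _ fun p _ => Submodule.sum_mem _ fun a _ =>
      Submodule.smul_mem _ _ ?_
    refine prod_one_extra_mem _ A ξ T hdA ?_
    intro ℓ'' hℓ''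
    rw [sites_insert, Finset.disjoint_left]
    intro j hj hjA
    obtain ⟨ℓ0, hℓ0⟩ := hT
    have hne0 : ℓ0 ≠ ℓ'' := fun h => (Finset.mem_sdiff.1 hℓ'').2 (h ▸ hℓ0)
    rcases Finset.mem_insert.1 hj with rfl | hj
    · exact (Finset.disjoint_left.1 (hdA ℓ0 ℓ'' hne0)) (hall ℓ0 hℓ0) hjA
    · rw [sites_sup] at hj
      obtain ⟨ℓ, _, hℓ⟩ := Finset.mem_sup.1 hj
      have hne : ℓ.1 ≠ ℓ'' := fun h => (Finset.mem_sdiff.1 hℓ'').2 (h ▸ ℓ.2)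
      exact (Finset.disjoint_left.1 (hdA ℓ.1 ℓ'' hne))
        (sites_CMf_subset _ _ _ _ hℓ) hjA
  · push_neg at hall
    obtain ⟨ℓ0, hℓ0T, hℓ0⟩ := hall
    have heq : (fun z : stateSpace (Xa := Xa) N =>
        (∑ x : ∀ i, Xa i, (z.val x : ℝ) * μv (x i) *
            ∏ ℓ ∈ T, (indC (toCS (A ℓ) (ξ ℓ)) (Function.update x i b)
              - indC (toCS (A ℓ) (ξ ℓ)) x)) *
          ∏ ℓ ∈ Finset.univ \ T, margRZ (A ℓ) z.val (ξ ℓ)) = 0 := by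
      funext z
      have : ∀ x : ∀ i, Xa i, (∏ ℓ ∈ T,
          (indC (toCS (A ℓ) (ξ ℓ)) (Function.update x i b)
            - indC (toCS (A ℓ) (ξ ℓ)) x)) = 0 := by
        intro x
        refine Finset.prod_eq_zero hℓ0T ?_
        rw [dv_zero _ _ _ _ _ hℓ0, sub_self]
      show (∑ x : ∀ i, Xa i, (z.val x : ℝ) * μv (x i) * _) * _ = 0
      rw [Finset.sum_congr rfl fun x _ => by rw [this x, mul_zero],
        Finset.sum_const, smul_zero, zero_mul]
    rw [heq]
    exact Submodule.zero_mem _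

/-! ### Generator-level membership -/

lemma recGen_mem (ρ : Finset (Fin n) → ℝ) {m : ℕ} (A : Fin m → Finset (Fin n))
    (ξ : Fin m → ∀ i, Xa i) [∀ i, Nonempty (Xa i)]
    (hdA : ∀ k l, k ≠ l → Disjoint (A k) (A l)) :
    (fun z : stateSpace (Xa := Xa) N =>
        recGenE ρ N (fun z => ∏ ℓ : Fin m, margRZ (A ℓ) z.val (ξ ℓ)) z) ∈
      Submodule.span ℝ (genSet (Xa := Xa) N) := by
  have heq : (fun z : stateSpace (Xa := Xa) N =>
      recGenE ρ N (fun z => ∏ ℓ : Fin m, margRZ (A ℓ) z.val (ξ ℓ)) z) =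
      (∑ G : Finset (Fin n), ∑ T ∈ (Finset.univ : Finset (Fin m)).powerset,
        (ρ G / (4 * N)) • fun z : stateSpace (Xa := Xa) N =>
          (∑ x : ∀ i, Xa i, ∑ y : ∀ i, Xa i, (z.val x : ℝ) * (z.val y : ℝ) *
              ∏ ℓ ∈ T, margRZ (A ℓ) (jump G x y) (ξ ℓ)) *
            ∏ ℓ ∈ Finset.univ \ T, margRZ (A ℓ) z.val (ξ ℓ))
      - ((∑ G : Finset (Fin n), ρ G / (4 * N)) * (N : ℝ) ^ 2) •
          fun z : stateSpace (Xa := Xa) N =>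
            ∏ ℓ : Fin m, margRZ (A ℓ) z.val (ξ ℓ) := by
    funext z
    rw [recGen_formula ρ A ξ z]
    simp only [Pi.sub_apply, Finset.sum_apply, Pi.smul_apply, smul_eq_mul]
    rw [mul_assoc]
  rw [heq]
  refine Submodule.sub_mem _
    (Submodule.sum_mem _ fun G _ => Submodule.sum_mem _ fun T _ =>
      Submodule.smul_mem _ _ (rec_term_mem G A ξ T hdA))
    (Submodule.smul_mem _ _ ?_)
  exact prodMarg_mem Finset.univ A ξ fun k _ l _ => hdA k l

lemma mutGen_mem (μ : ∀ i, Xa i → Xa i → ℝ) {m : ℕ} (A : Fin m → Finset (Fin n))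
    (ξ : Fin m → ∀ i, Xa i) [∀ i, Nonempty (Xa i)]
    (hdA : ∀ k l, k ≠ l → Disjoint (A k) (A l)) :
    (fun z : stateSpace (Xa := Xa) N =>
        mutGenE μ N (fun z => ∏ ℓ : Fin m, margRZ (A ℓ) z.val (ξ ℓ)) z) ∈
      Submodule.span ℝ (genSet (Xa := Xa) N) := by
  have heq : (fun z : stateSpace (Xa := Xa) N =>
      mutGenE μ N (fun z => ∏ ℓ : Fin m, margRZ (A ℓ) z.val (ξ ℓ)) z) =
      ∑ i : Fin n, ∑ T ∈ ((Finset.univ : Finset (Fin m)).powerset).erase ∅,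
        ∑ b : Xa i, fun z : stateSpace (Xa := Xa) N =>
          (∑ x : ∀ i, Xa i, (z.val x : ℝ) * μ i (x i) b *
              ∏ ℓ ∈ T, (indC (toCS (A ℓ) (ξ ℓ)) (Function.update x i b)
                - indC (toCS (A ℓ) (ξ ℓ)) x)) *
            ∏ ℓ ∈ Finset.univ \ T, margRZ (A ℓ) z.val (ξ ℓ) := by
    funext z
    rw [mutGen_formula μ A ξ z]
    simp only [Finset.sum_apply]
    refine Finset.sum_congr rfl fun i _ => Finset.sum_congr rfl fun T _ => ?_
    rw [Finset.sum_mul]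
  rw [heq]
  refine Submodule.sum_mem _ fun i _ => Submodule.sum_mem _ fun T hT =>
    Submodule.sum_mem _ fun b _ => ?_
  have hTne : T.Nonempty :=
    Finset.nonempty_iff_ne_empty.2 (Finset.mem_erase.1 hT).1
  exact mut_term_mem i b (fun a => μ i a b) A ξ T hTne hdA

/-! ### Linearity of the generators in the function argument -/

lemma recGenE_zero (ρ : Finset (Fin n) → ℝ) (z : stateSpace (Xa := Xa) N) :
    recGenE ρ N (0 : stateSpace (Xa := Xa) N → ℝ) z = 0 := by
  unfold recGenE
  refine Finset.sum_eq_zero fun G _ => Finset.sum_eq_zero fun x _ =>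
    Finset.sum_eq_zero fun y _ => ?_
  by_cases h : (∀ w, 0 ≤ (z.val + jump G x y) w) ∧
      ∑ w : ∀ i, Xa i, (z.val + jump G x y) w = (N : ℤ)
  · rw [dif_pos h]
    show _ * ((0:ℝ) - 0) = 0
    ring
  · rw [dif_neg h, mul_zero]

lemma recGenE_add (ρ : Finset (Fin n) → ℝ) (f g : stateSpace (Xa := Xa) N → ℝ)
    (z : stateSpace (Xa := Xa) N) :
    recGenE ρ N (f + g) z = recGenE ρ N f z + recGenE ρ N g z := by
  unfold recGenE
  simp only [← Finset.sum_add_distrib]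
  refine Finset.sum_congr rfl fun G _ => Finset.sum_congr rfl fun x _ =>
    Finset.sum_congr rfl fun y _ => ?_
  by_cases h : (∀ w, 0 ≤ (z.val + jump G x y) w) ∧
      ∑ w : ∀ i, Xa i, (z.val + jump G x y) w = (N : ℤ)
  · rw [dif_pos h, dif_pos h, dif_pos h]
    show _ * (f _ + g _ - (f z + g z)) = _
    ring
  · rw [dif_neg h, dif_neg h, dif_neg h]
    ring

lemma recGenE_smul (ρ : Finset (Fin n) → ℝ) (c : ℝ) (f : stateSpace (Xa := Xa) N → ℝ)
    (z : stateSpace (Xa := Xa) N) :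
    recGenE ρ N (c • f) z = c * recGenE ρ N f z := by
  unfold recGenE
  simp only [Finset.mul_sum]
  refine Finset.sum_congr rfl fun G _ => Finset.sum_congr rfl fun x _ =>
    Finset.sum_congr rfl fun y _ => ?_
  by_cases h : (∀ w, 0 ≤ (z.val + jump G x y) w) ∧
      ∑ w : ∀ i, Xa i, (z.val + jump G x y) w = (N : ℤ)
  · rw [dif_pos h, dif_pos h]
    show _ * (c * f _ - c * f z) = _
    ring
  · rw [dif_neg h, dif_neg h]
    ring

lemma mutGenE_zero (μ : ∀ i, Xa i → Xa i → ℝ) (z : stateSpace (Xa := Xa) N) :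
    mutGenE μ N (0 : stateSpace (Xa := Xa) N → ℝ) z = 0 := by
  unfold mutGenE
  refine Finset.sum_eq_zero fun i _ => Finset.sum_eq_zero fun x _ =>
    Finset.sum_eq_zero fun b _ => ?_
  by_cases h : (∀ w, 0 ≤ (z.val - delta x + delta (Function.update x i b)) w) ∧
      ∑ w : ∀ i, Xa i, (z.val - delta x + delta (Function.update x i b)) w = (N : ℤ)
  · rw [dif_pos h]
    show _ * ((0:ℝ) - 0) = 0
    ring
  · rw [dif_neg h, mul_zero]

lemma mutGenE_add (μ : ∀ i, Xa i → Xa i → ℝ) (f g : stateSpace (Xa := Xa) N → ℝ)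
    (z : stateSpace (Xa := Xa) N) :
    mutGenE μ N (f + g) z = mutGenE μ N f z + mutGenE μ N g z := by
  unfold mutGenE
  simp only [← Finset.sum_add_distrib]
  refine Finset.sum_congr rfl fun i _ => Finset.sum_congr rfl fun x _ =>
    Finset.sum_congr rfl fun b _ => ?_
  by_cases h : (∀ w, 0 ≤ (z.val - delta x + delta (Function.update x i b)) w) ∧
      ∑ w : ∀ i, Xa i, (z.val - delta x + delta (Function.update x i b)) w = (N : ℤ)
  · rw [dif_pos h, dif_pos h, dif_pos h]
    show _ * (f _ + g _ - (f z + g z)) = _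
    ring
  · rw [dif_neg h, dif_neg h, dif_neg h]
    ring

lemma mutGenE_smul (μ : ∀ i, Xa i → Xa i → ℝ) (c : ℝ) (f : stateSpace (Xa := Xa) N → ℝ)
    (z : stateSpace (Xa := Xa) N) :
    mutGenE μ N (c • f) z = c * mutGenE μ N f z := by
  unfold mutGenE
  simp only [Finset.mul_sum]
  refine Finset.sum_congr rfl fun i _ => Finset.sum_congr rfl fun x _ =>
    Finset.sum_congr rfl fun b _ => ?_
  by_cases h : (∀ w, 0 ≤ (z.val - delta x + delta (Function.update x i b)) w) ∧
      ∑ w : ∀ i, Xa i, (z.val - delta x + delta (Function.update x i b)) w = (N : ℤ)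
  · rw [dif_pos h, dif_pos h]
    show _ * (c * f _ - c * f z) = _
    ring
  · rw [dif_neg h, dif_neg h]
    ring

end


/-- For the Moran model with recombination and mutation, the linear span `W` of all
products `z ↦ ∏_{A ∈ 𝒜} (π_A.z)(ξ_A)` over finite families `𝒜` of pairwise disjoint
nonempty subsets of `S` (the empty family giving the constant `1`) and arbitrary
marginal types `ξ_A` is invariant under the generator `𝒢 + M`; hence the hierarchy of
expectations of products of marginal counts closes after finitely many steps. -/
theorem span_invariant_recombination_mutation (hn : 1 ≤ n)
    [∀ i, Fintype (Xa i)] [∀ i, Nonempty (Xa i)]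
    (ρ : Finset (Fin n) → ℝ) (hρ0 : ∀ G, 0 ≤ ρ G) (hρc : ∀ G, ρ G = ρ Gᶜ)
    (hρe : ρ ∅ = 0) (hρu : ρ Finset.univ = 0)
    (μ : ∀ i, Xa i → Xa i → ℝ) (hμ0 : ∀ i a c, 0 ≤ μ i a c) (hμd : ∀ i a, μ i a a = 0)
    (N : ℕ) (hN : 0 < N)
    (f : stateSpace (Xa := Xa) N → ℝ)
    (hf : f ∈ Submodule.span ℝ
      {g : stateSpace (Xa := Xa) N → ℝ |
        ∃ (m : ℕ) (A : Fin m → Finset (Fin n)) (ξ : Fin m → ∀ i, Xa i),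
          (∀ ℓ, (A ℓ).Nonempty) ∧
          (∀ k l, k ≠ l → Disjoint (A k) (A l)) ∧
          g = fun z => ∏ ℓ : Fin m, margRZ (A ℓ) z.val (ξ ℓ)}) :
    (fun z => recGenE ρ N f z + mutGenE μ N f z) ∈ Submodule.span ℝ
      {g : stateSpace (Xa := Xa) N → ℝ |
        ∃ (m : ℕ) (A : Fin m → Finset (Fin n)) (ξ : Fin m → ∀ i, Xa i),
          (∀ ℓ, (A ℓ).Nonempty) ∧
          (∀ k l, k ≠ l → Disjoint (A k) (A l)) ∧
          g = fun z => ∏ ℓ : Fin m, margRZ (A ℓ) z.val (ξ ℓ)} := by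

  have hset : {g : stateSpace (Xa := Xa) N → ℝ |
      ∃ (m : ℕ) (A : Fin m → Finset (Fin n)) (ξ : Fin m → ∀ i, Xa i),
        (∀ ℓ, (A ℓ).Nonempty) ∧
        (∀ k l, k ≠ l → Disjoint (A k) (A l)) ∧
        g = fun z => ∏ ℓ : Fin m, margRZ (A ℓ) z.val (ξ ℓ)} = genSet (Xa := Xa) N := rfl
  rw [hset] at hf ⊢
  refine Submodule.span_induction
    (p := fun f _ => (fun z => recGenE ρ N f z + mutGenE μ N f z) ∈
      Submodule.span ℝ (genSet (Xa := Xa) N)) ?_ ?_ ?_ ?_ hf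
  · rintro g ⟨m, A, ξ, hne, hdA, rfl⟩
    exact Submodule.add_mem _ (recGen_mem ρ A ξ hdA) (mutGen_mem μ A ξ hdA)
  · show (fun z : stateSpace (Xa := Xa) N =>
        recGenE ρ N (0 : stateSpace (Xa := Xa) N → ℝ) z
          + mutGenE μ N (0 : stateSpace (Xa := Xa) N → ℝ) z) ∈
      Submodule.span ℝ (genSet (Xa := Xa) N)
    have : (fun z : stateSpace (Xa := Xa) N =>
        recGenE ρ N (0 : stateSpace (Xa := Xa) N → ℝ) z
          + mutGenE μ N (0 : stateSpace (Xa := Xa) N → ℝ) z) = 0 := by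
      funext z
      rw [recGenE_zero, mutGenE_zero, add_zero]
      rfl
    rw [this]
    exact Submodule.zero_mem _
  · intro g h _ _ hg hh
    show (fun z : stateSpace (Xa := Xa) N =>
        recGenE ρ N (g + h) z + mutGenE μ N (g + h) z) ∈
      Submodule.span ℝ (genSet (Xa := Xa) N)
    have : (fun z : stateSpace (Xa := Xa) N =>
        recGenE ρ N (g + h) z + mutGenE μ N (g + h) z) =
        (fun z : stateSpace (Xa := Xa) N => recGenE ρ N g z + mutGenE μ N g z)
          + fun z : stateSpace (Xa := Xa) N => recGenE ρ N h z + mutGenE μ N h z := by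
      funext z
      rw [recGenE_add, mutGenE_add]
      show _ = (recGenE ρ N g z + mutGenE μ N g z) + (recGenE ρ N h z + mutGenE μ N h z)
      ring
    rw [this]
    exact Submodule.add_mem _ hg hh
  · intro c g _ hg
    show (fun z : stateSpace (Xa := Xa) N =>
        recGenE ρ N (c • g) z + mutGenE μ N (c • g) z) ∈
      Submodule.span ℝ (genSet (Xa := Xa) N)
    have : (fun z : stateSpace (Xa := Xa) N =>
        recGenE ρ N (c • g) z + mutGenE μ N (c • g) z) =
        c • fun z : stateSpace (Xa := Xa) N => recGenE ρ N g z + mutGenE μ N g z := by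
      funext z
      rw [recGenE_smul, mutGenE_smul]
      show _ = c * (recGenE ρ N g z + mutGenE μ N g z)
      ring
    rw [this]
    exact Submodule.smul_mem _ _ hg

end MoranRecomb
end
end
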